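/- arXiv:2201.03022 — 7 statements merged into one kernel-verified Lean document; each statement's English description precedes it below -/
import Mathlib

section
/- There exists a 2-regular curve γ : ℝ → ℝ⁴ parametrized by arc length which does not admit any generalized Bishop frame of type F. -/
noncomputable section

open Set

abbrev E4 : Type := EuclideanSpace ℝ (Fin 4)
abbrev Mat4 : Type := Matrix (Fin 4) (Fin 4) ℝ

/-- A matrix-valued map is smooth on `I` (entrywise). -/
def SmoothMat (I : Set ℝ) (Z : ℝ → Mat4) : Prop :=
  ∀ i j, ContDiffOn ℝ (⊤ : ℕ∞) (fun s => Z s i j) I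

/-- `Z' = X · Z` on `I`, derivatives taken entrywise. -/
def MatDerivEq (I : Set ℝ) (Z X : ℝ → Mat4) : Prop :=
  ∀ s ∈ I, ∀ i j, deriv (fun t => Z t i j) s = (X s * Z s) i j

/-- A regular curve parametrized by arc length on `I`. -/
def IsRegularCurve (I : Set ℝ) (γ : ℝ → E4) : Prop :=
  ContDiffOn ℝ (⊤ : ℕ∞) γ I ∧ ∀ s ∈ I, ‖deriv γ s‖ = 1

def IsTwoRegularCurve (I : Set ℝ) (γ : ℝ → E4) : Prop :=
  IsRegularCurve I γ ∧ ∀ s ∈ I, deriv (deriv γ) s ≠ 0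

/-- An orthonormal frame on `γ`: smooth, orthogonal, first row the tangent vector. -/
def IsFrameOn (I : Set ℝ) (γ : ℝ → E4) (Z : ℝ → Mat4) : Prop :=
  SmoothMat I Z ∧ (∀ s ∈ I, Z s ∈ Matrix.orthogonalGroup (Fin 4) ℝ) ∧
    ∀ s ∈ I, ∀ i, Z s 0 i = deriv γ s i

def ShapeB (X : Mat4) : Prop := X 1 2 = 0 ∧ X 1 3 = 0 ∧ X 2 3 = 0
def ShapeC (X : Mat4) : Prop := X 0 3 = 0 ∧ X 1 2 = 0 ∧ X 2 3 = 0
def ShapeD (X : Mat4) : Prop := X 0 2 = 0 ∧ X 0 3 = 0 ∧ X 2 3 = 0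
def ShapeF (X : Mat4) : Prop := X 0 2 = 0 ∧ X 0 3 = 0 ∧ X 1 3 = 0

/-- `γ` admits a generalized Bishop frame whose coefficient matrix has the given shape. -/
def AdmitsFrame (Shape : Mat4 → Prop) (I : Set ℝ) (γ : ℝ → E4) : Prop :=
  ∃ Z X : ℝ → Mat4, IsFrameOn I γ Z ∧ MatDerivEq I Z X ∧ ∀ s ∈ I, Shape (X s)

/- ===== Auxiliary development ===== -/
namespace NoTypeFAux

open Real Filter

local notation "Q" => expNegInvGlue

/-! ### Derivatives of `expNegInvGlue` -/

lemma Q_eventually_pos {x : ℝ} (hx : 0 < x) :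
    (fun y => Q y) =ᶠ[nhds x] fun y => Real.exp (-y⁻¹) := by
  filter_upwards [Ioi_mem_nhds hx] with y hy
  simp [expNegInvGlue, not_le.2 (mem_Ioi.1 hy)]

lemma exp_inv_hasDerivAt {x : ℝ} (hx : x ≠ 0) :
    HasDerivAt (fun y => Real.exp (-y⁻¹)) (Real.exp (-x⁻¹) * (x ^ 2)⁻¹) x := by
  have h1 : HasDerivAt (fun y : ℝ => -y⁻¹) ((x ^ 2)⁻¹) x := by
    simpa [Pi.neg_def] using (hasDerivAt_inv hx).neg
  exact h1.exp

lemma Q_hasDerivAt_pos {x : ℝ} (hx : 0 < x) :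
    HasDerivAt Q (Real.exp (-x⁻¹) * (x ^ 2)⁻¹) x :=
  (exp_inv_hasDerivAt hx.ne').congr_of_eventuallyEq (Q_eventually_pos hx)

lemma derivQ_pos {x : ℝ} (hx : 0 < x) : deriv Q x = Real.exp (-x⁻¹) * (x ^ 2)⁻¹ :=
  (Q_hasDerivAt_pos hx).deriv

lemma derivQ_neg {x : ℝ} (hx : x < 0) : deriv Q x = 0 := by
  have h : (fun y => Q y) =ᶠ[nhds x] fun _ => (0 : ℝ) := by
    filter_upwards [Iio_mem_nhds hx] with y hy
    exact expNegInvGlue.zero_of_nonpos (le_of_lt hy)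
  rw [h.deriv_eq]
  exact deriv_const _ _

lemma deriv2Q_neg {x : ℝ} (hx : x < 0) : deriv (deriv Q) x = 0 := by
  have h : (fun y => deriv Q y) =ᶠ[nhds x] fun _ => (0 : ℝ) := by
    filter_upwards [Iio_mem_nhds hx] with y hy
    exact derivQ_neg hy
  rw [h.deriv_eq]
  exact deriv_const _ _

lemma deriv2Q_pos {x : ℝ} (hx : 0 < x) (hx2 : x < 1/2) :
    deriv (deriv Q) x ≠ 0 := by
  have h : (fun y => deriv Q y) =ᶠ[nhds x] fun y => Real.exp (-y⁻¹) * (y ^ 2)⁻¹ := by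
    filter_upwards [Ioi_mem_nhds hx] with y hy
    exact derivQ_pos hy
  have h2 : HasDerivAt (fun y => Real.exp (-y⁻¹) * (y ^ 2)⁻¹)
      (Real.exp (-x⁻¹) * (x ^ 2)⁻¹ * (x ^ 2)⁻¹
        + Real.exp (-x⁻¹) * (-(2 * x ^ 1) / (x ^ 2) ^ 2)) x :=
    (exp_inv_hasDerivAt hx.ne').mul ((hasDerivAt_pow 2 x).inv (pow_ne_zero _ hx.ne'))
  rw [(h2.congr_of_eventuallyEq h).deriv]
  have hE : 0 < Real.exp (-x⁻¹) := Real.exp_pos _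
  have key : (0:ℝ) < Real.exp (-x⁻¹) * (x ^ 2)⁻¹ * (x ^ 2)⁻¹
      + Real.exp (-x⁻¹) * (-(2 * x ^ 1) / (x ^ 2) ^ 2) := by
    rw [div_eq_mul_inv]
    have heq : Real.exp (-x⁻¹) * (x ^ 2)⁻¹ * (x ^ 2)⁻¹
        + Real.exp (-x⁻¹) * (-(2 * x ^ 1) * ((x ^ 2) ^ 2)⁻¹)
        = Real.exp (-x⁻¹) * ((x^2)^2)⁻¹ * (1 - 2 * x) := by
      field_simp
      ring
    rw [heq]
    have : 0 < 1 - 2*x := by linarith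
    positivity
  exact ne_of_gt key

/-! ### The curve -/

def LL : (Fin 4 → ℝ) ≃L[ℝ] E4 := (PiLp.continuousLinearEquiv 2 ℝ (fun _ : Fin 4 => ℝ)).symm

def Fv (s : ℝ) : Fin 4 → ℝ := ![1, s, Q (-s), Q s]
def Fv1 (s : ℝ) : Fin 4 → ℝ := ![0, 1, -deriv Q (-s), deriv Q s]
def Fv2 (s : ℝ) : Fin 4 → ℝ := ![0, 0, deriv (deriv Q) (-s), deriv (deriv Q) s]

def wv : ℝ → E4 := fun s => LL (Fv s)

lemma Fv_0 (s : ℝ) : Fv s 0 = 1 := rfl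
lemma Fv_1 (s : ℝ) : Fv s 1 = s := rfl
lemma Fv_2 (s : ℝ) : Fv s 2 = Q (-s) := rfl
lemma Fv_3 (s : ℝ) : Fv s 3 = Q s := rfl
lemma Fv1_0 (s : ℝ) : Fv1 s 0 = 0 := rfl
lemma Fv1_1 (s : ℝ) : Fv1 s 1 = 1 := rfl
lemma Fv1_2 (s : ℝ) : Fv1 s 2 = -deriv Q (-s) := rfl
lemma Fv1_3 (s : ℝ) : Fv1 s 3 = deriv Q s := rfl
lemma Fv2_0 (s : ℝ) : Fv2 s 0 = 0 := rfl
lemma Fv2_1 (s : ℝ) : Fv2 s 1 = 0 := rfl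
lemma Fv2_2 (s : ℝ) : Fv2 s 2 = deriv (deriv Q) (-s) := rfl
lemma Fv2_3 (s : ℝ) : Fv2 s 3 = deriv (deriv Q) s := rfl


lemma Q_contDiff : ContDiff ℝ (⊤ : ℕ∞) Q := expNegInvGlue.contDiff
lemma Q1_contDiff : ContDiff ℝ (⊤ : ℕ∞) (deriv Q) := by
  have := (contDiff_infty_iff_deriv.1 (by exact_mod_cast Q_contDiff)).2
  exact_mod_cast this

lemma hQdiff : Differentiable ℝ Q := Q_contDiff.differentiable (by norm_num)
lemma hQ1diff : Differentiable ℝ (deriv Q) := Q1_contDiff.differentiable (by norm_num)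

lemma Fv_hasDerivAt (s : ℝ) : HasDerivAt Fv (Fv1 s) s := by
  rw [hasDerivAt_pi]
  intro i
  fin_cases i
  · simpa [Fv, Fv1] using hasDerivAt_const s (1:ℝ)
  · simpa [Fv, Fv1] using hasDerivAt_id' s
  · have : HasDerivAt (fun t : ℝ => Q (-t)) (-deriv Q (-s)) s := by
      simpa [Function.comp_def] using ((hQdiff (-s)).hasDerivAt).comp s (hasDerivAt_neg s)
    simpa [Fv, Fv1] using this
  · simpa [Fv, Fv1] using (hQdiff s).hasDerivAt

lemma Fv1_hasDerivAt (s : ℝ) : HasDerivAt Fv1 (Fv2 s) s := by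
  rw [hasDerivAt_pi]
  intro i
  fin_cases i
  · simpa [Fv1, Fv2] using hasDerivAt_const s (0:ℝ)
  · simpa [Fv1, Fv2] using hasDerivAt_const s (1:ℝ)
  · have : HasDerivAt (fun t : ℝ => -deriv Q (-t)) (deriv (deriv Q) (-s)) s := by
      simpa [Pi.neg_def, Function.comp_def] using (((hQ1diff (-s)).hasDerivAt).comp s (hasDerivAt_neg s)).neg
    simpa [Fv1, Fv2] using this
  · simpa [Fv1, Fv2] using (hQ1diff s).hasDerivAt

lemma wv_hasDerivAt (s : ℝ) : HasDerivAt wv (LL (Fv1 s)) s :=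
  LL.toContinuousLinearMap.hasFDerivAt.comp_hasDerivAt s (Fv_hasDerivAt s)

lemma wv1_hasDerivAt (s : ℝ) : HasDerivAt (fun t => LL (Fv1 t)) (LL (Fv2 s)) s :=
  LL.toContinuousLinearMap.hasFDerivAt.comp_hasDerivAt s (Fv1_hasDerivAt s)

lemma Fv_contDiff : ContDiff ℝ (⊤ : ℕ∞) Fv := by
  apply contDiff_pi.2
  intro i
  fin_cases i
  · simpa [Fv] using contDiff_const
  · exact contDiff_id
  · exact Q_contDiff.comp (contDiff_neg)
  · exact Q_contDiff

lemma wv_contDiff : ContDiff ℝ (⊤ : ℕ∞) wv :=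
  LL.toContinuousLinearMap.contDiff.comp Fv_contDiff

lemma wv_ne_zero (s : ℝ) : wv s ≠ 0 := by
  intro h
  have h0 : (wv s) 0 = 1 := rfl
  rw [h] at h0
  simp at h0

lemma norm_wv_pos (s : ℝ) : 0 < ‖wv s‖ := norm_pos_iff.2 (wv_ne_zero s)

def σf : ℝ → ℝ := fun s => ‖wv s‖⁻¹

lemma σf_pos (s : ℝ) : 0 < σf s := inv_pos.2 (norm_wv_pos s)

lemma norm_wv_contDiff : ContDiff ℝ (⊤ : ℕ∞) (fun s => ‖wv s‖) := by
  rw [contDiff_iff_contDiffAt]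
  intro s
  have h1 : ContDiffAt ℝ (⊤ : ℕ∞) (fun x : E4 => ‖x‖) (wv s) :=
    contDiffAt_norm (𝕜 := ℝ) (wv_ne_zero s)
  exact h1.comp s wv_contDiff.contDiffAt

lemma σf_contDiff : ContDiff ℝ (⊤ : ℕ∞) σf := by
  rw [contDiff_iff_contDiffAt]
  intro s
  exact (norm_wv_contDiff.contDiffAt).inv (norm_wv_pos s).ne'

def Tf : ℝ → E4 := fun s => σf s • wv s

lemma Tf_norm (s : ℝ) : ‖Tf s‖ = 1 := by
  rw [Tf, norm_smul, Real.norm_eq_abs]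
  rw [show σf s = ‖wv s‖⁻¹ from rfl, abs_of_pos (inv_pos.2 (norm_wv_pos s))]
  exact inv_mul_cancel₀ (norm_wv_pos s).ne'

lemma Tf_contDiff : ContDiff ℝ (⊤ : ℕ∞) Tf := σf_contDiff.smul wv_contDiff

lemma σf_hasDerivAt (s : ℝ) : HasDerivAt σf (deriv σf s) s :=
  ((σf_contDiff.differentiable (by norm_num)) s).hasDerivAt

lemma Tf_hasDerivAt (s : ℝ) :
    HasDerivAt Tf (deriv σf s • wv s + σf s • LL (Fv1 s)) s := by
  have h := (σf_hasDerivAt s).smul (wv_hasDerivAt s)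
  rw [add_comm] at h
  exact h

lemma Tf_cont : Continuous Tf := Tf_contDiff.continuous

def γf : ℝ → E4 := fun s => ∫ t in (0:ℝ)..s, Tf t

lemma γf_hasDerivAt (s : ℝ) : HasDerivAt γf (Tf s) s :=
  intervalIntegral.integral_hasDerivAt_right
    (Tf_cont.intervalIntegrable 0 s)
    (Tf_cont.stronglyMeasurableAtFilter _ _)
    Tf_cont.continuousAt

lemma deriv_γf : deriv γf = Tf := funext fun s => (γf_hasDerivAt s).deriv

lemma γf_contDiff : ContDiff ℝ (⊤ : ℕ∞) γf := by
  rw [show ((⊤:ℕ∞) : WithTop ℕ∞) = (⊤:ℕ∞) from rfl, contDiff_infty_iff_deriv]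
  refine ⟨fun s => (γf_hasDerivAt s).differentiableAt, ?_⟩
  rw [deriv_γf]
  exact Tf_contDiff

lemma deriv_Tf_ne (s : ℝ) : deriv Tf s ≠ 0 := by
  rw [(Tf_hasDerivAt s).deriv]
  intro h
  have h0 : (deriv σf s • wv s + σf s • LL (Fv1 s)) 0 = 0 := by rw [h]; rfl
  have h1 : (deriv σf s • wv s + σf s • LL (Fv1 s)) 1 = 0 := by rw [h]; rfl
  have e0 : (wv s) 0 = 1 := rfl
  have e1 : (wv s) 1 = s := rfl
  have f0 : (LL (Fv1 s)) 0 = 0 := rfl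
  have f1 : (LL (Fv1 s)) 1 = 1 := rfl
  have g0 : deriv σf s * 1 + σf s * 0 = 0 := by simpa [e0, f0] using h0
  have g1 : deriv σf s * s + σf s * 1 = 0 := by simpa [e1, f1] using h1
  have hd : deriv σf s = 0 := by linarith
  rw [hd] at g1
  have := (σf_pos s).ne'
  simp at g1
  exact this g1

lemma two_regular : ∀ s : ℝ, deriv (deriv γf) s ≠ 0 := by
  intro s
  rw [deriv_γf]
  exact deriv_Tf_ne s

/-! ### Second derivative data -/

def T1 : ℝ → E4 := fun s => deriv σf s • wv s + σf s • LL (Fv1 s)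
def T2 : ℝ → E4 := fun s =>
  (deriv σf s • LL (Fv1 s) + deriv (deriv σf) s • wv s) +
  (σf s • LL (Fv2 s) + deriv σf s • LL (Fv1 s))

lemma Tf_hasDerivAt' (s : ℝ) : HasDerivAt Tf (T1 s) s := Tf_hasDerivAt s

lemma σ1_hasDerivAt (s : ℝ) : HasDerivAt (deriv σf) (deriv (deriv σf) s) s := by
  have h := (contDiff_infty_iff_deriv.1 σf_contDiff).2
  exact ((h.differentiable (by norm_num)) s).hasDerivAt

lemma T1_hasDerivAt (s : ℝ) : HasDerivAt T1 (T2 s) s :=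
  ((σ1_hasDerivAt s).smul (wv_hasDerivAt s)).add ((σf_hasDerivAt s).smul (wv1_hasDerivAt s))

lemma coordD {f : ℝ → E4} {f' : E4} {s : ℝ} (h : HasDerivAt f f' s) (i : Fin 4) :
    HasDerivAt (fun t => f t i) (f' i) s :=
  (EuclideanSpace.proj (𝕜 := ℝ) i).hasFDerivAt.comp_hasDerivAt s h

lemma sum_sq_Tf (s : ℝ) : ∑ j, Tf s j * Tf s j = 1 := by
  have h2 : ‖Tf s‖ ^ 2 = 1 := by rw [Tf_norm s]; norm_num
  rw [← h2, EuclideanSpace.norm_eq]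
  rw [Real.sq_sqrt (by positivity)]
  congr 1 with j
  rw [Real.norm_eq_abs, ← sq, sq_abs, sq]

lemma Tf_dot_T1 (s : ℝ) : ∑ j, Tf s j * T1 s j = 0 := by
  have hD : HasDerivAt (fun t => ∑ j, Tf t j * Tf t j)
      (∑ j, (T1 s j * Tf s j + Tf s j * T1 s j)) s :=
    HasDerivAt.fun_sum fun j _ => (coordD (Tf_hasDerivAt' s) j).mul (coordD (Tf_hasDerivAt' s) j)
  have hconst : (fun t => ∑ j, Tf t j * Tf t j) = fun _ => (1:ℝ) :=
    funext fun t => sum_sq_Tf t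
  rw [hconst] at hD
  have h0 := (hasDerivAt_const s (1:ℝ)).unique hD
  have heq : ∑ j, (T1 s j * Tf s j + Tf s j * T1 s j) = 2 * ∑ j, Tf s j * T1 s j := by
    rw [Finset.mul_sum]
    exact Finset.sum_congr rfl fun j _ => by ring
  rw [heq] at h0
  linarith

end NoTypeFAux
open NoTypeFAux in
/-- There is a 2-regular curve on ℝ admitting no generalized Bishop frame of type F. -/
theorem exists_two_regular_no_typeF :
    ∃ γ : ℝ → E4, IsTwoRegularCurve Set.univ γ ∧ ¬ AdmitsFrame ShapeF Set.univ γ := by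
  refine ⟨γf, ⟨⟨γf_contDiff.contDiffOn, fun s _ => by rw [deriv_γf]; exact Tf_norm s⟩,
    fun s _ => two_regular s⟩, ?_⟩
  rintro ⟨Z, X, ⟨hZs, hZo, hZr⟩, hDe, hSh⟩
  have hrow0 : ∀ s j, Z s 0 j = Tf s j := by
    intro s j
    rw [hZr s (mem_univ s) j, deriv_γf]
  have O : ∀ s (i j : Fin 4), ∑ k, Z s i k * Z s j k = if i = j then 1 else 0 := by
    intro s i j
    have h := (Matrix.mem_orthogonalGroup_iff (Fin 4) ℝ).1 (hZo s (mem_univ s))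
    have h2 : (Z s * Matrix.transpose (Z s)) i j = (1 : Mat4) i j := by rw [h]
    simpa [Matrix.mul_apply, Matrix.transpose_apply, Matrix.one_apply] using h2
  have hZd : ∀ s (i j : Fin 4), HasDerivAt (fun t => Z t i j) (∑ k, X s i k * Z s k j) s := by
    intro s i j
    have h := hZs i j
    rw [contDiffOn_univ] at h
    have hd : DifferentiableAt ℝ (fun t => Z t i j) s := (h.differentiable (by norm_num)) s
    have h' := hd.hasDerivAt
    rwa [hDe s (mem_univ s) i j, Matrix.mul_apply] at h'
  have key : ∀ s (i m : Fin 4), ∑ j, (∑ k, X s i k * Z s k j) * Z s m j = X s i m := by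
    intro s i m
    calc ∑ j, (∑ k, X s i k * Z s k j) * Z s m j
        = ∑ j, ∑ k, X s i k * (Z s k j * Z s m j) := by
          refine Finset.sum_congr rfl fun j _ => ?_
          rw [Finset.sum_mul]
          exact Finset.sum_congr rfl fun k _ => by ring
      _ = ∑ k, ∑ j, X s i k * (Z s k j * Z s m j) := Finset.sum_comm
      _ = ∑ k, X s i k * ∑ j, Z s k j * Z s m j :=
          Finset.sum_congr rfl fun k _ => (Finset.mul_sum _ _ _).symm
      _ = ∑ k, X s i k * (if k = m then 1 else 0) :=
          Finset.sum_congr rfl fun k _ => by rw [O s k m]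
      _ = X s i m := by simp
  have key' : ∀ s (i m : Fin 4), ∑ j, Z s m j * (∑ k, X s i k * Z s k j) = X s i m := by
    intro s i m
    rw [← key s i m]
    exact Finset.sum_congr rfl fun j _ => mul_comm _ _
  have hX02 : ∀ s, X s 0 2 = 0 := fun s => (hSh s (mem_univ s)).1
  have hX03 : ∀ s, X s 0 3 = 0 := fun s => (hSh s (mem_univ s)).2.1
  have hX13 : ∀ s, X s 1 3 = 0 := fun s => (hSh s (mem_univ s)).2.2
  have hT1 : ∀ s (j : Fin 4), T1 s j = ∑ k, X s 0 k * Z s k j := by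
    intro s j
    have h1 : deriv (fun t => Tf t j) s = T1 s j := (coordD (Tf_hasDerivAt' s) j).deriv
    have h2 : deriv (fun t => Z t 0 j) s = ∑ k, X s 0 k * Z s k j := (hZd s 0 j).deriv
    have h3 : (fun t => Z t 0 j) = (fun t => Tf t j) := funext fun t => hrow0 t j
    rw [h3] at h2
    rw [← h1, h2]
  have u3T : ∀ s, ∑ j, Z s 3 j * Tf s j = 0 := by
    intro s
    have h := O s 3 0
    rw [if_neg (by decide : ¬ (3 : Fin 4) = 0)] at h
    calc ∑ j, Z s 3 j * Tf s j = ∑ j, Z s 3 j * Z s 0 j :=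
          Finset.sum_congr rfl fun j _ => by rw [hrow0 s j]
      _ = 0 := h
  have u3T1 : ∀ s, ∑ j, Z s 3 j * T1 s j = 0 := by
    intro s
    calc ∑ j, Z s 3 j * T1 s j
        = ∑ j, Z s 3 j * (∑ k, X s 0 k * Z s k j) :=
          Finset.sum_congr rfl fun j _ => by rw [hT1 s j]
      _ = X s 0 3 := key' s 0 3
      _ = 0 := hX03 s
  have u2T1 : ∀ s, ∑ j, Z s 2 j * T1 s j = 0 := by
    intro s
    calc ∑ j, Z s 2 j * T1 s j
        = ∑ j, Z s 2 j * (∑ k, X s 0 k * Z s k j) :=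
          Finset.sum_congr rfl fun j _ => by rw [hT1 s j]
      _ = X s 0 2 := key' s 0 2
      _ = 0 := hX02 s
  have u0T1 : ∀ s, ∑ j, Z s 0 j * T1 s j = 0 := by
    intro s
    calc ∑ j, Z s 0 j * T1 s j = ∑ j, Tf s j * T1 s j :=
          Finset.sum_congr rfl fun j _ => by rw [hrow0 s j]
      _ = 0 := Tf_dot_T1 s
  have hX31 : ∀ s, X s 3 1 = 0 := by
    intro s
    have hfun : (fun t => ∑ j, Z t 1 j * Z t 3 j) = fun _ => (0:ℝ) := by
      funext t
      have h := O t 1 3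
      rwa [if_neg (by decide : ¬ (1 : Fin 4) = 3)] at h
    have hD2 : HasDerivAt (fun t => ∑ j, Z t 1 j * Z t 3 j)
        (∑ j, ((∑ k, X s 1 k * Z s k j) * Z s 3 j + Z s 1 j * (∑ k, X s 3 k * Z s k j))) s :=
      HasDerivAt.fun_sum fun j _ => (hZd s 1 j).mul (hZd s 3 j)
    rw [hfun] at hD2
    have h0 := (hasDerivAt_const s (0:ℝ)).unique hD2
    rw [Finset.sum_add_distrib, key s 1 3, key' s 3 1] at h0
    have := hX13 s
    linarith
  have u3T2 : ∀ s, ∑ j, Z s 3 j * T2 s j = 0 := by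
    intro s
    have hfun : (fun t => ∑ j, Z t 3 j * T1 t j) = fun _ => (0:ℝ) := funext u3T1
    have hD2 : HasDerivAt (fun t => ∑ j, Z t 3 j * T1 t j)
        (∑ j, ((∑ k, X s 3 k * Z s k j) * T1 s j + Z s 3 j * T2 s j)) s :=
      HasDerivAt.fun_sum fun j _ => (hZd s 3 j).mul (coordD (T1_hasDerivAt s) j)
    rw [hfun] at hD2
    have h0 := (hasDerivAt_const s (0:ℝ)).unique hD2
    rw [Finset.sum_add_distrib] at h0
    have hsw : ∑ j, (∑ k, X s 3 k * Z s k j) * T1 s j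
        = ∑ k, X s 3 k * (∑ j, Z s k j * T1 s j) := by
      calc ∑ j, (∑ k, X s 3 k * Z s k j) * T1 s j
          = ∑ j, ∑ k, X s 3 k * (Z s k j * T1 s j) := by
            refine Finset.sum_congr rfl fun j _ => ?_
            rw [Finset.sum_mul]
            exact Finset.sum_congr rfl fun k _ => by ring
        _ = ∑ k, ∑ j, X s 3 k * (Z s k j * T1 s j) := Finset.sum_comm
        _ = ∑ k, X s 3 k * (∑ j, Z s k j * T1 s j) :=
            Finset.sum_congr rfl fun k _ => (Finset.mul_sum _ _ _).symm
    have hfirst : ∑ k, X s 3 k * (∑ j, Z s k j * T1 s j) = 0 := by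
      rw [Fin.sum_univ_four, u0T1 s, u2T1 s, u3T1 s, hX31 s]
      ring
    rw [hsw, hfirst] at h0
    linarith
  -- translation to the coordinate functions
  have hTfj : ∀ s (j : Fin 4), Tf s j = σf s * Fv s j := fun s j => rfl
  have hT1j : ∀ s (j : Fin 4), T1 s j = deriv σf s * Fv s j + σf s * Fv1 s j := fun s j => rfl
  have hT2j : ∀ s (j : Fin 4), T2 s j =
      (deriv σf s * Fv1 s j + deriv (deriv σf) s * Fv s j)
        + (σf s * Fv2 s j + deriv σf s * Fv1 s j) := fun s j => rfl
  have hA : ∀ s, ∑ j, Z s 3 j * Fv s j = 0 := by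
    intro s
    have h := u3T s
    have heq : ∑ j, Z s 3 j * Tf s j = σf s * ∑ j, Z s 3 j * Fv s j := by
      rw [Finset.mul_sum]
      exact Finset.sum_congr rfl fun j _ => by rw [hTfj s j]; ring
    rw [heq] at h
    exact (mul_eq_zero.1 h).resolve_left (σf_pos s).ne'
  have hB : ∀ s, ∑ j, Z s 3 j * Fv1 s j = 0 := by
    intro s
    have h := u3T1 s
    have heq : ∑ j, Z s 3 j * T1 s j
        = deriv σf s * (∑ j, Z s 3 j * Fv s j) + σf s * ∑ j, Z s 3 j * Fv1 s j := by
      simp only [Finset.mul_sum]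
      rw [← Finset.sum_add_distrib]
      exact Finset.sum_congr rfl fun j _ => by rw [hT1j s j]; ring
    rw [heq, hA s] at h
    simp only [mul_zero, zero_add] at h
    exact (mul_eq_zero.1 h).resolve_left (σf_pos s).ne'
  have hC : ∀ s, ∑ j, Z s 3 j * Fv2 s j = 0 := by
    intro s
    have h := u3T2 s
    have heq : ∑ j, Z s 3 j * T2 s j
        = (deriv σf s * (∑ j, Z s 3 j * Fv1 s j)
            + deriv (deriv σf) s * (∑ j, Z s 3 j * Fv s j))
          + (σf s * (∑ j, Z s 3 j * Fv2 s j)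
            + deriv σf s * (∑ j, Z s 3 j * Fv1 s j)) := by
      simp only [Finset.mul_sum]
      rw [← Finset.sum_add_distrib, ← Finset.sum_add_distrib, ← Finset.sum_add_distrib]
      exact Finset.sum_congr rfl fun j _ => by rw [hT2j s j]; ring
    rw [heq, hA s, hB s] at h
    simp only [mul_zero, zero_add, add_zero] at h
    exact (mul_eq_zero.1 h).resolve_left (σf_pos s).ne'
  -- endgame
  have claimR : ∀ s ∈ Ioo (0:ℝ) (1/2), (Z s 3 2)^2 = 1 := by
    rintro s ⟨hs0, hs2⟩
    have hQm : expNegInvGlue (-s) = 0 := expNegInvGlue.zero_of_nonpos (by linarith)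
    have hQ1m : deriv expNegInvGlue (-s) = 0 := derivQ_neg (by linarith)
    have hQ2m : deriv (deriv expNegInvGlue) (-s) = 0 := deriv2Q_neg (by linarith)
    have hq2 : deriv (deriv expNegInvGlue) s ≠ 0 := deriv2Q_pos hs0 hs2
    have hc := hC s
    rw [Fin.sum_univ_four,
      Fv2_0, Fv2_1, Fv2_2, Fv2_3, hQ2m] at hc
    simp only [mul_zero, zero_add, add_zero] at hc
    have h33 : Z s 3 3 = 0 := (mul_eq_zero.1 hc).resolve_right hq2
    have hb := hB s
    rw [Fin.sum_univ_four,
      Fv1_0, Fv1_1, Fv1_2, Fv1_3, hQ1m, h33] at hb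
    simp only [mul_zero, mul_one, neg_zero, zero_mul, zero_add, add_zero] at hb
    have ha := hA s
    rw [Fin.sum_univ_four,
      Fv_0, Fv_1, Fv_2, Fv_3, hQm, hb, h33] at ha
    simp only [mul_zero, mul_one, zero_mul, zero_add, add_zero] at ha
    have hO := O s 3 3
    rw [Fin.sum_univ_four, if_pos rfl, ha, hb, h33] at hO
    nlinarith [hO]
  have claimL : ∀ s ∈ Ioo (-(1/2):ℝ) 0, Z s 3 2 = 0 := by
    rintro s ⟨hs0, hs2⟩
    have hQ2m : deriv (deriv expNegInvGlue) s = 0 := deriv2Q_neg hs2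
    have hq2 : deriv (deriv expNegInvGlue) (-s) ≠ 0 := deriv2Q_pos (by linarith) (by linarith)
    have hc := hC s
    rw [Fin.sum_univ_four,
      Fv2_0, Fv2_1, Fv2_2, Fv2_3, hQ2m] at hc
    simp only [mul_zero, zero_add, add_zero] at hc
    exact (mul_eq_zero.1 hc).resolve_right hq2
  have hφ : Continuous (fun s => Z s 3 2) := by
    have h := hZs 3 2
    rw [contDiffOn_univ] at h
    exact h.continuous
  have hRlim : Filter.Tendsto (fun s => (Z s 3 2)^2) (nhdsWithin 0 (Ioi 0))
      (nhds ((Z 0 3 2)^2)) :=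
    ((hφ.pow 2).continuousAt.continuousWithinAt (s := Ioi 0))
  have hRev : (fun s => (Z s 3 2)^2) =ᶠ[nhdsWithin 0 (Ioi 0)] fun _ => (1:ℝ) := by
    filter_upwards [Ioo_mem_nhdsGT_of_mem
      (by constructor <;> norm_num : (0:ℝ) ∈ Ico (0:ℝ) (1/2))] with s hs
    exact claimR s hs
  have h1 : (Z 0 3 2)^2 = 1 := tendsto_nhds_unique (hRlim.congr' hRev) tendsto_const_nhds
  have hLlim : Filter.Tendsto (fun s => Z s 3 2) (nhdsWithin 0 (Iio 0))
      (nhds (Z 0 3 2)) :=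
    (hφ.continuousAt.continuousWithinAt (s := Iio 0))
  have hLev : (fun s => Z s 3 2) =ᶠ[nhdsWithin 0 (Iio 0)] fun _ => (0:ℝ) := by
    filter_upwards [Ioo_mem_nhdsLT_of_mem
      (by constructor <;> norm_num : (0:ℝ) ∈ Ioc (-(1/2):ℝ) 0)] with s hs
    exact claimL s hs
  have h2 : Z 0 3 2 = 0 := tendsto_nhds_unique (hLlim.congr' hLev) tendsto_const_nhds
  rw [h2] at h1
  norm_num at h1
end
end

section
/- There exists a regular curve γ : ℝ → ℝ⁴ parametrized by arc length which admits a generalized Bishop frame of type C but does not admit any generalized Bishop frame of type D. -/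
noncomputable section

open Set

/-! ### Auxiliary construction -/

open Real Filter

def Af : ℝ → ℝ := fun s => expNegInvGlue (-s)
def Bf : ℝ → ℝ := expNegInvGlue

theorem Af_smooth : ContDiff ℝ (⊤ : ℕ∞) Af := expNegInvGlue.contDiff.comp contDiff_neg
theorem Bf_smooth : ContDiff ℝ (⊤ : ℕ∞) Bf := expNegInvGlue.contDiff

theorem Af_of_nonneg {s : ℝ} (hs : 0 ≤ s) : Af s = 0 :=
  expNegInvGlue.zero_of_nonpos (by linarith)
theorem Bf_of_nonpos {s : ℝ} (hs : s ≤ 0) : Bf s = 0 := expNegInvGlue.zero_of_nonpos hs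

theorem Af_zero : Af 0 = 0 := Af_of_nonneg le_rfl

theorem derivAf_of_pos {s : ℝ} (hs : 0 < s) : deriv Af s = 0 := by
  have h : Af =ᶠ[nhds s] (fun _ => 0) := by
    filter_upwards [Ioi_mem_nhds hs] with t ht
    exact Af_of_nonneg (le_of_lt ht)
  rw [h.deriv_eq, deriv_const]

theorem derivBf_of_neg {s : ℝ} (hs : s < 0) : deriv Bf s = 0 := by
  have h : Bf =ᶠ[nhds s] (fun _ => 0) := by
    filter_upwards [Iio_mem_nhds hs] with t ht
    exact Bf_of_nonpos (le_of_lt ht)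
  rw [h.deriv_eq, deriv_const]

theorem derivAf_of_neg {s : ℝ} (hs : s < 0) : deriv Af s = exp s⁻¹ * (-(s ^ 2)⁻¹) := by
  have h1 : HasDerivAt (fun t : ℝ => exp t⁻¹) (exp s⁻¹ * (-(s ^ 2)⁻¹)) s :=
    (hasDerivAt_inv (ne_of_lt hs)).exp
  have h2 : Af =ᶠ[nhds s] (fun t => exp t⁻¹) := by
    filter_upwards [Iio_mem_nhds hs] with t ht
    have : Af t = exp (-(-t)⁻¹) := by
      rw [Af]; show expNegInvGlue (-t) = _
      rw [expNegInvGlue, if_neg (by simp only [mem_Iio] at ht; push_neg; linarith)]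
    rw [this, inv_neg, neg_neg]
  exact ((h1.congr_of_eventuallyEq h2)).deriv

theorem derivAf_ne_of_neg {s : ℝ} (hs : s < 0) : deriv Af s ≠ 0 := by
  rw [derivAf_of_neg hs]
  have := exp_pos s⁻¹
  have hs0 : s ≠ 0 := ne_of_lt hs
  have h2 : (0:ℝ) < (s ^ 2)⁻¹ := by positivity
  intro h; nlinarith

theorem derivBf_of_pos {s : ℝ} (hs : 0 < s) : deriv Bf s = exp (-s⁻¹) * (s ^ 2)⁻¹ := by
  have h1 : HasDerivAt (fun t : ℝ => exp (-t⁻¹)) (exp (-s⁻¹) * (s ^ 2)⁻¹) s := by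
    have := ((hasDerivAt_inv (ne_of_gt hs)).fun_neg).exp
    convert this using 1; ring
  have h2 : Bf =ᶠ[nhds s] (fun t => exp (-t⁻¹)) := by
    filter_upwards [Ioi_mem_nhds hs] with t ht
    show expNegInvGlue t = _
    rw [expNegInvGlue, if_neg (by simp only [mem_Ioi] at ht; push_neg; linarith)]
  exact ((h1.congr_of_eventuallyEq h2)).deriv

theorem derivBf_ne_of_pos {s : ℝ} (hs : 0 < s) : deriv Bf s ≠ 0 := by
  rw [derivBf_of_pos hs]
  have := exp_pos (-s⁻¹)
  have hs0 : s ≠ 0 := ne_of_gt hs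
  positivity

theorem keyBA (s : ℝ) : deriv Bf s * sin (Af s) = 0 := by
  rcases lt_trichotomy s 0 with h | h | h
  · rw [derivBf_of_neg h, zero_mul]
  · subst h; rw [Af_zero, Real.sin_zero, mul_zero]
  · rw [Af_of_nonneg (le_of_lt h), Real.sin_zero, mul_zero]

theorem hAd (s : ℝ) : HasDerivAt Af (deriv Af s) s :=
  ((Af_smooth.differentiable (by simp)) s).hasDerivAt
theorem hBd (s : ℝ) : HasDerivAt Bf (deriv Bf s) s :=
  ((Bf_smooth.differentiable (by simp)) s).hasDerivAt

def myv : ℝ → E4 := fun s => WithLp.toLp 2 ![cos (Af s) * cos (Bf s), sin (Af s), cos (Af s) * sin (Bf s), 0]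

theorem myv_smooth : ContDiff ℝ (⊤ : ℕ∞) myv := by
  have h : ContDiff ℝ (⊤ : ℕ∞) (fun s => (![cos (Af s) * cos (Bf s), sin (Af s),
      cos (Af s) * sin (Bf s), 0] : Fin 4 → ℝ)) := by
    apply contDiff_pi.2
    intro i
    fin_cases i <;> simp
    · exact Af_smooth.cos.mul Bf_smooth.cos
    · exact Af_smooth.sin
    · exact Af_smooth.cos.mul Bf_smooth.sin
    · exact contDiff_const
  exact (PiLp.continuousLinearEquiv 2 ℝ (fun _ : Fin 4 => ℝ)).symm.contDiff.comp h

theorem myv_norm (s : ℝ) : ‖myv s‖ = 1 := by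
  have h0 : ‖myv s‖ = Real.sqrt (∑ i : Fin 4, ‖myv s i‖ ^ 2) := EuclideanSpace.norm_eq _
  rw [h0, Fin.sum_univ_four]
  have e : ∀ x : ℝ, ‖x‖ ^ 2 = x ^ 2 := fun x => by rw [Real.norm_eq_abs, sq_abs]
  show Real.sqrt (‖cos (Af s) * cos (Bf s)‖^2 + ‖sin (Af s)‖^2
    + ‖cos (Af s) * sin (Bf s)‖^2 + ‖(0:ℝ)‖^2) = 1
  simp only [e]
  rw [show (cos (Af s) * cos (Bf s))^2 + sin (Af s)^2 + (cos (Af s) * sin (Bf s))^2 + (0:ℝ)^2 = 1 by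
    nlinarith [sin_sq_add_cos_sq (Af s), sin_sq_add_cos_sq (Bf s)]]
  exact Real.sqrt_one

def myγ : ℝ → E4 := fun s => ∫ t in (0:ℝ)..s, myv t

theorem myγ_hasDeriv (s : ℝ) : HasDerivAt myγ (myv s) s := by
  have hc : Continuous myv := myv_smooth.continuous
  exact intervalIntegral.integral_hasDerivAt_right (hc.intervalIntegrable _ _)
    hc.stronglyMeasurable.stronglyMeasurableAtFilter hc.continuousAt

theorem myγ_deriv : deriv myγ = myv := funext fun s => (myγ_hasDeriv s).deriv

theorem myγ_smooth : ContDiff ℝ (⊤ : ℕ∞) myγ := by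
  have h : ContDiff ℝ (⊤ : ℕ∞) (deriv myγ) := myγ_deriv ▸ myv_smooth
  exact contDiff_infty_iff_deriv.2 ⟨fun s => (myγ_hasDeriv s).differentiableAt, h⟩

def myZ : ℝ → Mat4 := fun s => Matrix.of
  ![![cos (Af s) * cos (Bf s), sin (Af s), cos (Af s) * sin (Bf s), 0],
    ![-sin (Af s) * cos (Bf s), cos (Af s), -sin (Af s) * sin (Bf s), 0],
    ![-sin (Bf s), 0, cos (Bf s), 0],
    ![0, 0, 0, 1]]

def myX : ℝ → Mat4 := fun s => Matrix.of
  ![![0, deriv Af s, deriv Bf s * cos (Af s), 0],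
    ![-deriv Af s, 0, 0, 0],
    ![-(deriv Bf s * cos (Af s)), 0, 0, 0],
    ![0, 0, 0, 0]]

theorem myv_apply (s : ℝ) (i : Fin 4) : myv s i = myZ s 0 i := rfl

theorem myZ_smoothMat : ∀ i j, ContDiffOn ℝ (⊤ : ℕ∞) (fun s => myZ s i j) univ := by
  intro i j
  rw [contDiffOn_univ]
  fin_cases i <;> fin_cases j <;>
    simp only [myZ, Matrix.of_apply, Matrix.cons_val', Matrix.cons_val_zero,
      Matrix.cons_val_one, Matrix.head_cons, Matrix.empty_val', Matrix.cons_val_fin_one,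
      Matrix.head_fin_const, Matrix.cons_val_two, Matrix.cons_val_three, Matrix.tail_cons] <;>
    first
      | exact contDiff_const
      | exact Af_smooth.cos.mul Bf_smooth.cos
      | exact Af_smooth.sin
      | exact Af_smooth.cos.mul Bf_smooth.sin
      | exact Af_smooth.sin.neg.mul Bf_smooth.cos
      | exact Af_smooth.cos
      | exact Af_smooth.sin.neg.mul Bf_smooth.sin
      | exact Bf_smooth.sin.neg
      | exact Bf_smooth.cos

theorem myZ_orth (s : ℝ) : myZ s ∈ Matrix.orthogonalGroup (Fin 4) ℝ := by
  rw [Matrix.mem_orthogonalGroup_iff]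
  ext i j
  fin_cases i <;> fin_cases j <;>
    simp [myZ, Matrix.mul_apply, Fin.sum_univ_four, Matrix.conjTranspose_apply,
      Matrix.one_apply] <;>
    first
      | nlinarith [sin_sq_add_cos_sq (Af s), sin_sq_add_cos_sq (Bf s)]
      | linear_combination (-(sin (Af s) * cos (Af s))) * sin_sq_add_cos_sq (Bf s)

theorem myZ_derivEq : ∀ s ∈ univ, ∀ i j, deriv (fun t => myZ t i j) s = (myX s * myZ s) i j := by
  intro s _ i j
  have hA := hAd s
  have hB := hBd s
  have hRHS : ∀ i j, (myX s * myZ s) i j =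
      myX s i 0 * myZ s 0 j + myX s i 1 * myZ s 1 j + myX s i 2 * myZ s 2 j
        + myX s i 3 * myZ s 3 j := by
    intro i j; rw [Matrix.mul_apply, Fin.sum_univ_four]
  rw [hRHS]
  fin_cases i <;> fin_cases j
  · show deriv (fun t => cos (Af t) * cos (Bf t)) s = _
    rw [(hA.cos.fun_mul hB.cos).deriv]
    show _ = (0:ℝ) * _ + deriv Af s * (-sin (Af s) * cos (Bf s))
      + deriv Bf s * cos (Af s) * -sin (Bf s) + 0 * 0
    ring
  · show deriv (fun t => sin (Af t)) s = _
    rw [hA.sin.deriv]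
    show _ = (0:ℝ) * _ + deriv Af s * cos (Af s) + deriv Bf s * cos (Af s) * 0 + 0 * 0
    ring
  · show deriv (fun t => cos (Af t) * sin (Bf t)) s = _
    rw [(hA.cos.fun_mul hB.sin).deriv]
    show _ = (0:ℝ) * _ + deriv Af s * (-sin (Af s) * sin (Bf s))
      + deriv Bf s * cos (Af s) * cos (Bf s) + 0 * 0
    ring
  · show deriv (fun _ => (0:ℝ)) s = _
    rw [deriv_const]
    show (0:ℝ) = 0 * 0 + deriv Af s * 0 + deriv Bf s * cos (Af s) * 0 + 0 * 1
    ring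
  · show deriv (fun t => -sin (Af t) * cos (Bf t)) s = _
    rw [(hA.sin.fun_neg.fun_mul hB.cos).deriv]
    show -(cos (Af s) * deriv Af s) * cos (Bf s) + -sin (Af s) * (-sin (Bf s) * deriv Bf s)
      = -deriv Af s * (cos (Af s) * cos (Bf s)) + (0:ℝ) * (-sin (Af s) * cos (Bf s))
        + 0 * (-sin (Bf s)) + 0 * 0
    linear_combination (sin (Bf s)) * keyBA s
  · show deriv (fun t => cos (Af t)) s = _
    rw [hA.cos.deriv]
    show _ = -deriv Af s * sin (Af s) + (0:ℝ) * _ + 0 * (0:ℝ) + 0 * 0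
    ring
  · show deriv (fun t => -sin (Af t) * sin (Bf t)) s = _
    rw [(hA.sin.fun_neg.fun_mul hB.sin).deriv]
    show -(cos (Af s) * deriv Af s) * sin (Bf s) + -sin (Af s) * (cos (Bf s) * deriv Bf s)
      = -deriv Af s * (cos (Af s) * sin (Bf s)) + (0:ℝ) * (-sin (Af s) * sin (Bf s))
        + 0 * cos (Bf s) + 0 * 0
    linear_combination (-cos (Bf s)) * keyBA s
  · show deriv (fun _ => (0:ℝ)) s = _
    rw [deriv_const]
    show (0:ℝ) = -deriv Af s * 0 + 0 * 0 + 0 * 0 + 0 * 1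
    ring
  · show deriv (fun t => -sin (Bf t)) s = _
    rw [hB.sin.fun_neg.deriv]
    show -(cos (Bf s) * deriv Bf s)
      = -(deriv Bf s * cos (Af s)) * (cos (Af s) * cos (Bf s))
        + (0:ℝ) * (-sin (Af s) * cos (Bf s)) + 0 * (-sin (Bf s)) + 0 * 0
    linear_combination (-(cos (Bf s)) * sin (Af s)) * keyBA s
      + (cos (Bf s) * deriv Bf s) * sin_sq_add_cos_sq (Af s)
  · show deriv (fun _ => (0:ℝ)) s = _
    rw [deriv_const]
    show (0:ℝ) = -(deriv Bf s * cos (Af s)) * sin (Af s) + (0:ℝ) * cos (Af s) + 0 * 0 + 0 * 0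
    linear_combination (cos (Af s)) * keyBA s
  · show deriv (fun t => cos (Bf t)) s = _
    rw [hB.cos.deriv]
    show -sin (Bf s) * deriv Bf s
      = -(deriv Bf s * cos (Af s)) * (cos (Af s) * sin (Bf s))
        + (0:ℝ) * (-sin (Af s) * sin (Bf s)) + 0 * cos (Bf s) + 0 * 0
    linear_combination (-(sin (Bf s)) * sin (Af s)) * keyBA s
      + (sin (Bf s) * deriv Bf s) * sin_sq_add_cos_sq (Af s)
  · show deriv (fun _ => (0:ℝ)) s = _
    rw [deriv_const]
    show (0:ℝ) = -(deriv Bf s * cos (Af s)) * 0 + (0:ℝ) * 0 + 0 * 0 + 0 * 1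
    ring
  · show deriv (fun _ => (0:ℝ)) s = _
    rw [deriv_const]
    show (0:ℝ) = (0:ℝ) * _ + 0 * _ + 0 * _ + 0 * 0
    ring
  · show deriv (fun _ => (0:ℝ)) s = _
    rw [deriv_const]
    show (0:ℝ) = (0:ℝ) * _ + 0 * _ + 0 * (0:ℝ) + 0 * 0
    ring
  · show deriv (fun _ => (0:ℝ)) s = _
    rw [deriv_const]
    show (0:ℝ) = (0:ℝ) * _ + 0 * _ + 0 * _ + 0 * 0
    ring
  · show deriv (fun _ => (1:ℝ)) s = _
    rw [deriv_const]
    show (0:ℝ) = (0:ℝ) * 0 + 0 * 0 + 0 * 0 + 0 * 1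
    ring

theorem myG (s : ℝ) (i : Fin 4) : (myX s * myZ s) 0 i
    = deriv Af s * myZ s 1 i + deriv Bf s * cos (Af s) * myZ s 2 i := by
  rw [Matrix.mul_apply, Fin.sum_univ_four]
  show (0:ℝ) * myZ s 0 i + deriv Af s * myZ s 1 i
    + deriv Bf s * cos (Af s) * myZ s 2 i + 0 * myZ s 3 i = _
  ring

/-- There is a regular curve on ℝ admitting a frame of type C but no frame of type D. -/
theorem exists_regular_typeC_not_typeD :
    ∃ γ : ℝ → E4, IsRegularCurve Set.univ γ ∧ AdmitsFrame ShapeC Set.univ γ ∧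
      ¬ AdmitsFrame ShapeD Set.univ γ := by
  refine ⟨myγ, ⟨contDiffOn_univ.2 myγ_smooth, fun s _ => by rw [myγ_deriv]; exact myv_norm s⟩,
    ⟨myZ, myX, ⟨myZ_smoothMat, fun s _ => myZ_orth s,
      fun s _ i => by rw [myγ_deriv]; rfl⟩, myZ_derivEq, fun s _ => ⟨rfl, rfl, rfl⟩⟩, ?_⟩
  rintro ⟨W, X, ⟨hWs, hWo, hWr⟩, hd, hsh⟩
  -- basic consequences
  have hrow : ∀ s i, W s 0 i = myv s i := by
    intro s i
    rw [hWr s (mem_univ s) i, myγ_deriv]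
  have horth : ∀ s : ℝ, ∀ i j : Fin 4,
      W s i 0 * W s j 0 + W s i 1 * W s j 1 + W s i 2 * W s j 2 + W s i 3 * W s j 3
        = if i = j then (1:ℝ) else 0 := by
    intro s i j
    have h := (Matrix.mem_orthogonalGroup_iff (Fin 4) ℝ).1 (hWo s (mem_univ s))
    have h2 : (W s * star (W s)) i j = (1 : Mat4) i j := by exact congrFun (congrFun h i) j
    rw [Matrix.mul_apply, Fin.sum_univ_four] at h2
    simpa [Matrix.star_apply, Matrix.one_apply] using h2
  -- the structural equation: γ'' = X₀₀ Z₀ + X₀₁ Z₁ for the D-frame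
  have heq : ∀ (s : ℝ) (i : Fin 4), (myX s * myZ s) 0 i
      = X s 0 0 * W s 0 i + X s 0 1 * W s 1 i := by
    intro s i
    have h := hd s (mem_univ s) 0 i
    have hfun : (fun t => W t 0 i) = fun t => myZ t 0 i := funext fun t => hrow t i
    rw [hfun, myZ_derivEq s (mem_univ s) 0 i] at h
    rw [h, Matrix.mul_apply, Fin.sum_univ_four]
    rcases hsh s (mem_univ s) with ⟨h02, h03, _⟩
    rw [h02, h03]; ring
  -- X₀₀ vanishes
  have hX00 : ∀ s : ℝ, X s 0 0 = 0 := by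
    intro s
    have h00 := horth s 0 0
    have h10 := horth s 1 0
    rw [if_pos rfl] at h00
    rw [if_neg (by decide)] at h10
    have hGv : (myX s * myZ s) 0 0 * W s 0 0 + (myX s * myZ s) 0 1 * W s 0 1
        + (myX s * myZ s) 0 2 * W s 0 2 + (myX s * myZ s) 0 3 * W s 0 3 = 0 := by
      rw [myG s 0, myG s 1, myG s 2, myG s 3, hrow s 0, hrow s 1, hrow s 2, hrow s 3]
      show (deriv Af s * (-sin (Af s) * cos (Bf s)) + deriv Bf s * cos (Af s) * (-sin (Bf s)))
            * (cos (Af s) * cos (Bf s))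
          + (deriv Af s * cos (Af s) + deriv Bf s * cos (Af s) * 0) * sin (Af s)
          + (deriv Af s * (-sin (Af s) * sin (Bf s)) + deriv Bf s * cos (Af s) * cos (Bf s))
            * (cos (Af s) * sin (Bf s))
          + (deriv Af s * 0 + deriv Bf s * cos (Af s) * 0) * 0 = 0
      linear_combination (-(deriv Af s * sin (Af s) * cos (Af s))) * sin_sq_add_cos_sq (Bf s)
    linear_combination (-(X s 0 0)) * h00 + (-(X s 0 1)) * h10 + hGv
      + (-(W s 0 0)) * heq s 0 + (-(W s 0 1)) * heq s 1 + (-(W s 0 2)) * heq s 2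
      + (-(W s 0 3)) * heq s 3
  have hP : ∀ (s : ℝ) (i : Fin 4), (myX s * myZ s) 0 i = X s 0 1 * W s 1 i := by
    intro s i
    rw [heq s i, hX00 s]; ring
  -- on the right, the second row has vanishing second coordinate
  have hright : ∀ s : ℝ, 0 < s → W s 1 1 = 0 := by
    intro s hs
    have hA0 : Af s = 0 := Af_of_nonneg hs.le
    have hdA : deriv Af s = 0 := derivAf_of_pos hs
    have h1 := hP s 1
    rw [myG s 1] at h1
    have hZ11 : myZ s 1 1 = cos (Af s) := rfl
    have hZ21 : myZ s 2 1 = 0 := rfl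
    rw [hZ11, hZ21, hdA] at h1
    have hx : X s 0 1 ≠ 0 := by
      intro hx
      have e0 := hP s 0
      have e2 := hP s 2
      rw [myG s 0, hx, zero_mul] at e0
      rw [myG s 2, hx, zero_mul] at e2
      have hZ10 : myZ s 1 0 = -sin (Af s) * cos (Bf s) := rfl
      have hZ20 : myZ s 2 0 = -sin (Bf s) := rfl
      have hZ12 : myZ s 1 2 = -sin (Af s) * sin (Bf s) := rfl
      have hZ22 : myZ s 2 2 = cos (Bf s) := rfl
      rw [hZ10, hZ20, hdA, hA0] at e0
      rw [hZ12, hZ22, hdA, hA0] at e2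
      simp only [Real.sin_zero, Real.cos_zero] at e0 e2
      have hsB : deriv Bf s * sin (Bf s) = 0 := by linear_combination (-1 : ℝ) * e0
      have hcB : deriv Bf s * cos (Bf s) = 0 := by linear_combination e2
      have : deriv Bf s = 0 := by
        linear_combination (-(deriv Bf s)) * sin_sq_add_cos_sq (Bf s)
          + sin (Bf s) * hsB + cos (Bf s) * hcB
      exact derivBf_ne_of_pos hs this
    have : X s 0 1 * W s 1 1 = 0 := by linarith [h1]
    rcases mul_eq_zero.1 this with h | h
    · exact absurd h hx
    · exact h
  -- on the left, the second row's second coordinate squares to cos² Af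
  have hleft : ∀ s : ℝ, s < 0 → (W s 1 1) ^ 2 = cos (Af s) ^ 2 := by
    intro s hs
    have hB0 : Bf s = 0 := Bf_of_nonpos hs.le
    have hdB : deriv Bf s = 0 := derivBf_of_neg hs
    have hdA : deriv Af s ≠ 0 := derivAf_ne_of_neg hs
    have e0 := hP s 0
    have e1 := hP s 1
    have e2 := hP s 2
    have e3 := hP s 3
    rw [myG s 0, show myZ s 1 0 = -sin (Af s) * cos (Bf s) from rfl,
      show myZ s 2 0 = -sin (Bf s) from rfl, hdB, hB0] at e0
    rw [myG s 1, show myZ s 1 1 = cos (Af s) from rfl,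
      show myZ s 2 1 = 0 from rfl, hdB] at e1
    rw [myG s 2, show myZ s 1 2 = -sin (Af s) * sin (Bf s) from rfl,
      show myZ s 2 2 = cos (Bf s) from rfl, hdB, hB0] at e2
    rw [myG s 3, show myZ s 1 3 = 0 from rfl, show myZ s 2 3 = 0 from rfl, hdB] at e3
    simp only [Real.sin_zero, Real.cos_zero] at e0 e1 e2 e3
    -- e0 : dA * (-sA * 1) = X01 * W10 ; e1 : dA * cA = X01 * W11 ; e2,e3 : 0 = X01 * W1i
    have h11 := horth s 1 1
    rw [if_pos rfl] at h11
    have hsq : X s 0 1 ^ 2 = deriv Af s ^ 2 := by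
      linear_combination (-(X s 0 1 ^ 2)) * h11
        + (deriv Af s * sin (Af s) - X s 0 1 * W s 1 0) * e0
        + (-(X s 0 1 * W s 1 1) - deriv Af s * cos (Af s)) * e1
        + (-(X s 0 1 * W s 1 2)) * e2 + (-(X s 0 1 * W s 1 3)) * e3
        + (deriv Af s ^ 2) * sin_sq_add_cos_sq (Af s)
    have hx : X s 0 1 ≠ 0 := by
      intro hx
      rw [hx] at hsq
      have h2 : deriv Af s ^ 2 = 0 := by linarith [hsq, sq_nonneg (0:ℝ)]
      exact hdA (pow_eq_zero_iff two_ne_zero |>.1 h2)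
    -- from e1 : W11 = dA cA / X01
    have hW11 : W s 1 1 = deriv Af s * cos (Af s) / X s 0 1 := by
      field_simp [hx]
      linarith [e1]
    rw [hW11, div_pow, mul_pow, ← hsq]
    field_simp [hx]
  -- continuity contradiction at 0
  have hcont : Continuous fun s => W s 1 1 := (contDiffOn_univ.1 (hWs 1 1)).continuous
  have h0 : W 0 1 1 = 0 := by
    have t1 : Filter.Tendsto (fun s => W s 1 1) (nhdsWithin 0 (Ioi 0)) (nhds (W 0 1 1)) :=
      (hcont.continuousAt).continuousWithinAt
    have t2 : Filter.Tendsto (fun s => W s 1 1) (nhdsWithin 0 (Ioi 0)) (nhds 0) := by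
      apply Filter.Tendsto.congr' _ tendsto_const_nhds
      filter_upwards [self_mem_nhdsWithin] with t ht
      exact (hright t ht).symm
    exact tendsto_nhds_unique t1 t2
  have h1 : (W 0 1 1) ^ 2 = 1 := by
    have t1 : Filter.Tendsto (fun s => (W s 1 1) ^ 2) (nhdsWithin 0 (Iio 0))
        (nhds ((W 0 1 1) ^ 2)) := ((hcont.pow 2).continuousAt).continuousWithinAt
    have t2 : Filter.Tendsto (fun s => (W s 1 1) ^ 2) (nhdsWithin 0 (Iio 0)) (nhds 1) := by
      have hc : Filter.Tendsto (fun s => cos (Af s) ^ 2) (nhdsWithin 0 (Iio 0)) (nhds 1) := by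
        have : Continuous fun s => cos (Af s) ^ 2 :=
          ((Real.continuous_cos.comp Af_smooth.continuous).pow 2)
        have h := this.continuousAt (x := 0)
        have h2 : cos (Af 0) ^ 2 = 1 := by rw [Af_zero, Real.cos_zero]; norm_num
        rw [ContinuousAt, h2] at h
        exact h.mono_left nhdsWithin_le_nhds
      apply Filter.Tendsto.congr' _ hc
      filter_upwards [self_mem_nhdsWithin] with t ht
      exact (hleft t ht).symm
    exact tendsto_nhds_unique t1 t2
  rw [h0] at h1
  norm_num at h1
end
end

section
/- There exists a regular curve γ : ℝ → ℝ⁴ parametrized by arc length which does not admit any generalized Bishop frame of type C. -/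
open Real


noncomputable section

open Set

section Aux

noncomputable def ψ (s : ℝ) : ℝ := expNegInvGlue s * expNegInvGlue (1 - s)

lemma ψ_contDiff : ContDiff ℝ (⊤ : ℕ∞) ψ :=
  expNegInvGlue.contDiff.mul (expNegInvGlue.contDiff.comp (contDiff_const.sub contDiff_id))

lemma ψ_nonpos {s : ℝ} (h : s ≤ 0) : ψ s = 0 := by
  simp [ψ, expNegInvGlue.zero_of_nonpos h]

lemma ψ_ge_one {s : ℝ} (h : 1 ≤ s) : ψ s = 0 := by
  simp [ψ, expNegInvGlue.zero_of_nonpos (by linarith : 1 - s ≤ 0)]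

lemma g_hasDerivAt {x : ℝ} (hx : 0 < x) :
    HasDerivAt expNegInvGlue (expNegInvGlue x * (x^2)⁻¹) x := by
  have h1 : HasDerivAt (fun y : ℝ => Real.exp (-y⁻¹)) (Real.exp (-x⁻¹) * (x^2)⁻¹) x := by
    have := ((hasDerivAt_inv (ne_of_gt hx)).neg).exp
    exact this.congr_deriv (by simp)
  have heq : (fun y : ℝ => Real.exp (-y⁻¹)) =ᶠ[nhds x] expNegInvGlue := by
    filter_upwards [IsOpen.mem_nhds isOpen_Ioi hx] with y hy
    simp [expNegInvGlue, not_le.2 (mem_Ioi.1 hy)]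
  have h2 := h1.congr_of_eventuallyEq heq.symm
  exact h2.congr_deriv (by simp [expNegInvGlue, not_le.2 hx])

lemma ψ_hasDerivAt {s : ℝ} (h0 : 0 < s) (h1 : s < 1) :
    HasDerivAt ψ (expNegInvGlue s * expNegInvGlue (1 - s) * ((s^2)⁻¹ - ((1-s)^2)⁻¹)) s := by
  have hg1 := g_hasDerivAt h0
  have hg2 : HasDerivAt (fun y : ℝ => expNegInvGlue (1 - y))
      (-(expNegInvGlue (1-s) * ((1-s)^2)⁻¹)) s := by
    have := (g_hasDerivAt (by linarith : (0:ℝ) < 1 - s)).comp s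
      ((hasDerivAt_const s (1:ℝ)).sub (hasDerivAt_id s))
    exact this.congr_deriv (by ring)
  have := hg1.mul hg2
  exact this.congr_deriv (by ring)

lemma ψ_deriv_ne {s : ℝ} (h0 : 0 < s) (h1 : s < 1) (hs : s ≠ 1/2) :
    deriv ψ s ≠ 0 := by
  rw [(ψ_hasDerivAt h0 h1).deriv]
  have p1 := expNegInvGlue.pos_of_pos h0
  have p2 := expNegInvGlue.pos_of_pos (by linarith : (0:ℝ) < 1 - s)
  have hne : (s^2)⁻¹ - ((1-s)^2)⁻¹ ≠ 0 := by
    intro h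
    have hs2 : (0:ℝ) < s^2 := pow_pos h0 2
    have ht2 : (0:ℝ) < (1-s)^2 := pow_pos (by linarith) 2
    have : s^2 = (1-s)^2 := by
      rw [sub_eq_zero, inv_inj] at h
      exact h
    have : s = 1 - s := by nlinarith
    apply hs; linarith
  exact mul_ne_zero (by positivity) hne

noncomputable def th1 (s : ℝ) : ℝ := ψ (s + 1) + ψ (s - 4)
noncomputable def th2 (s : ℝ) : ℝ := ψ s + ψ (s - 1)
noncomputable def th3 (s : ℝ) : ℝ := ψ (s - 2) + ψ (s - 3)

noncomputable def Tv (s : ℝ) : Fin 4 → ℝ :=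
  ![Real.cos (th1 s + th2 s + th3 s), Real.sin (th1 s), Real.sin (th2 s), Real.sin (th3 s)]

lemma Tv_contDiff (i : Fin 4) : ContDiff ℝ (⊤ : ℕ∞) (fun s => Tv s i) := by
  have h1 : ContDiff ℝ (⊤ : ℕ∞) th1 :=
    (ψ_contDiff.comp (contDiff_id.add contDiff_const)).add
      (ψ_contDiff.comp (contDiff_id.sub contDiff_const))
  have h2 : ContDiff ℝ (⊤ : ℕ∞) th2 :=
    ψ_contDiff.add (ψ_contDiff.comp (contDiff_id.sub contDiff_const))
  have h3 : ContDiff ℝ (⊤ : ℕ∞) th3 :=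
    (ψ_contDiff.comp (contDiff_id.sub contDiff_const)).add
      (ψ_contDiff.comp (contDiff_id.sub contDiff_const))
  fin_cases i <;> simp [Tv]
  · exact Real.contDiff_cos.comp ((h1.add h2).add h3)
  · exact Real.contDiff_sin.comp h1
  · exact Real.contDiff_sin.comp h2
  · exact Real.contDiff_sin.comp h3

/-- at most one of the angles is nonzero -/
lemma th_cases (s : ℝ) :
    (th1 s = 0 ∧ th2 s = 0) ∨ (th1 s = 0 ∧ th3 s = 0) ∨ (th2 s = 0 ∧ th3 s = 0) := by
  rcases le_or_gt s 0 with h | h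
  · right; right
    constructor
    · simp [th2, ψ_nonpos h, ψ_nonpos (by linarith : s - 1 ≤ 0)]
    · simp [th3, ψ_nonpos (by linarith : s - 2 ≤ 0), ψ_nonpos (by linarith : s - 3 ≤ 0)]
  rcases le_or_gt s 2 with h2 | h2
  · right; left
    constructor
    · simp [th1, ψ_ge_one (by linarith : 1 ≤ s + 1), ψ_nonpos (by linarith : s - 4 ≤ 0)]
    · simp [th3, ψ_nonpos (by linarith : s - 2 ≤ 0), ψ_nonpos (by linarith : s - 3 ≤ 0)]
  rcases le_or_gt s 4 with h4 | h4
  · left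
    constructor
    · simp [th1, ψ_ge_one (by linarith : 1 ≤ s + 1), ψ_nonpos (by linarith : s - 4 ≤ 0)]
    · simp [th2, ψ_ge_one (by linarith : 1 ≤ s), ψ_ge_one (by linarith : 1 ≤ s - 1)]
  · right; right
    constructor
    · simp [th2, ψ_ge_one (by linarith : 1 ≤ s), ψ_ge_one (by linarith : 1 ≤ s - 1)]
    · simp [th3, ψ_ge_one (by linarith : 1 ≤ s - 2), ψ_ge_one (by linarith : 1 ≤ s - 3)]

lemma Tv_unit (s : ℝ) :
    (Tv s 0)^2 + (Tv s 1)^2 + (Tv s 2)^2 + (Tv s 3)^2 = 1 := by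
  have : ∀ a : ℝ, Real.cos a ^ 2 + Real.sin a ^ 2 = 1 := fun a => by
    rw [add_comm]; exact Real.sin_sq_add_cos_sq a
  rcases th_cases s with ⟨h1, h2⟩ | ⟨h1, h3⟩ | ⟨h2, h3⟩
  · simp [Tv, h1, h2, this]
  · simp [Tv, h1, h3, this]
  · simp [Tv, h2, h3, this]


noncomputable def γc : ℝ → E4 := fun s =>
  (EuclideanSpace.equiv (Fin 4) ℝ).symm (fun i => ∫ t in (0:ℝ)..s, Tv t i)

lemma coord_hasDerivAt (i : Fin 4) (s : ℝ) :
    HasDerivAt (fun u => ∫ t in (0:ℝ)..u, Tv t i) (Tv s i) s := by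
  have hc : Continuous fun t => Tv t i := (Tv_contDiff i).continuous
  exact intervalIntegral.integral_hasDerivAt_right (hc.intervalIntegrable _ _)
    (hc.stronglyMeasurableAtFilter _ _) hc.continuousAt

lemma γc_hasDerivAt (s : ℝ) :
    HasDerivAt γc ((EuclideanSpace.equiv (Fin 4) ℝ).symm (fun i => Tv s i)) s := by
  have h : HasDerivAt (fun u => (fun i => ∫ t in (0:ℝ)..u, Tv t i : Fin 4 → ℝ))
      (fun i => Tv s i) s := hasDerivAt_pi.2 fun i => coord_hasDerivAt i s
  exact ((EuclideanSpace.equiv (Fin 4) ℝ).symm.toContinuousLinearMap.hasFDerivAt.comp_hasDerivAt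
    s h)

lemma γc_deriv_apply (s : ℝ) (i : Fin 4) : deriv γc s i = Tv s i := by
  rw [(γc_hasDerivAt s).deriv]
  rfl

lemma γc_contDiff : ContDiff ℝ (⊤ : ℕ∞) γc := by
  apply contDiff_euclidean.2
  intro i
  show ContDiff ℝ _ (fun u => ∫ t in (0:ℝ)..u, Tv t i)
  have hdiff : Differentiable ℝ (fun u => ∫ t in (0:ℝ)..u, Tv t i) :=
    fun s => (coord_hasDerivAt i s).differentiableAt
  have hderiv : deriv (fun u => ∫ t in (0:ℝ)..u, Tv t i) = fun s => Tv s i :=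
    funext fun s => (coord_hasDerivAt i s).deriv
  exact contDiff_infty_iff_deriv.2 ⟨hdiff, by rw [hderiv]; exact Tv_contDiff i⟩

lemma γc_norm_deriv (s : ℝ) : ‖deriv γc s‖ = 1 := by
  have : ‖deriv γc s‖ = Real.sqrt (∑ i : Fin 4, ‖deriv γc s i‖ ^ 2) :=
    EuclideanSpace.norm_eq _
  rw [this, Fin.sum_univ_four]
  simp only [γc_deriv_apply, Real.norm_eq_abs, sq_abs]
  rw [Tv_unit s, Real.sqrt_one]

section Frame

variable {Z X : ℝ → Mat4}
variable (hsm : ∀ i j, ContDiffOn ℝ (⊤ : ℕ∞) (fun s => Z s i j) univ)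
variable (horth : ∀ s : ℝ, Z s ∈ Matrix.orthogonalGroup (Fin 4) ℝ)
variable (hde : ∀ s : ℝ, ∀ i j, deriv (fun t => Z t i j) s = (X s * Z s) i j)

include horth in
lemma hZZ : ∀ (s : ℝ) i j, ∑ k, Z s i k * Z s j k = if i = j then 1 else 0 := by
  intro s i j
  have h := (Matrix.mem_orthogonalGroup_iff _ _).1 (horth s)
  have h2 := congrFun (congrFun h i) j
  simp only [Matrix.mul_apply, Matrix.star_apply, star_trivial, Matrix.one_apply] at h2
  exact h2

include horth in
lemma sum_XZ_Z : ∀ (s : ℝ) i j, ∑ k, (X s * Z s) i k * Z s j k = X s i j := by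
  intro s i j
  simp only [Matrix.mul_apply, Finset.sum_mul, mul_assoc]
  rw [Finset.sum_comm]
  simp only [← Finset.mul_sum]
  have hz := hZZ horth s
  calc ∑ l, X s i l * ∑ k, Z s l k * Z s j k
      = ∑ l, X s i l * (if l = j then 1 else 0) := by
        refine Finset.sum_congr rfl fun l _ => by rw [hz l j]
    _ = X s i j := by simp

include hsm hde in
lemma entry_hasDerivAt : ∀ (s : ℝ) i j, HasDerivAt (fun t => Z t i j) ((X s * Z s) i j) s := by
  intro s i j
  have hd : DifferentiableAt ℝ (fun t => Z t i j) s := by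
    have := (contDiffOn_univ.1 (hsm i j)).differentiable (by simp)
    exact this s
  have := hd.hasDerivAt
  rwa [hde s i j] at this

include hsm horth hde in
lemma Xskew : ∀ (s : ℝ) i j, X s i j + X s j i = 0 := by
  intro s i j
  have hD : HasDerivAt (fun t => ∑ k, Z t i k * Z t j k)
      (∑ k, ((X s * Z s) i k * Z s j k + Z s i k * (X s * Z s) j k)) s := by
    apply HasDerivAt.fun_sum
    intro k _
    exact (entry_hasDerivAt hsm hde s i k).mul (entry_hasDerivAt hsm hde s j k)
  have hconst : (fun t => ∑ k, Z t i k * Z t j k) = fun _ => (if i = j then (1:ℝ) else 0) :=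
    funext fun t => hZZ horth t i j
  have h0 : deriv (fun t => ∑ k, Z t i k * Z t j k) s = 0 := by
    rw [hconst]; simp
  have := hD.deriv
  rw [h0] at this
  have hsplit : (0:ℝ) = ∑ k, (X s * Z s) i k * Z s j k + ∑ k, Z s i k * (X s * Z s) j k := by
    rw [this, Finset.sum_add_distrib]
  rw [sum_XZ_Z (X := X) horth s i j] at hsplit
  have h2 : ∑ k, Z s i k * (X s * Z s) j k = X s j i := by
    rw [← sum_XZ_Z (X := X) horth s j i]
    exact Finset.sum_congr rfl fun k _ => mul_comm _ _
  rw [h2] at hsplit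
  linarith

end Frame

section Key
variable {Z X : ℝ → Mat4}
variable (hsm : ∀ i j, ContDiffOn ℝ (⊤ : ℕ∞) (fun s => Z s i j) univ)
variable (horth : ∀ s : ℝ, Z s ∈ Matrix.orthogonalGroup (Fin 4) ℝ)
variable (hde : ∀ s : ℝ, ∀ i j, deriv (fun t => Z t i j) s = (X s * Z s) i j)
variable (hrow0 : ∀ (s : ℝ) i, Z s 0 i = Tv s i)

include hsm horth hde hrow0 in
lemma key_zero {a b s : ℝ} {i : Fin 4} (hi : i ≠ 0) {φ : ℝ → ℝ} {d : ℝ}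
    (hs : s ∈ Ioo a b)
    (hT0 : ∀ t ∈ Ioo a b, Tv t 0 = Real.cos (φ t))
    (hTi : ∀ t ∈ Ioo a b, Tv t i = Real.sin (φ t))
    (hTj : ∀ j, j ≠ 0 → j ≠ i → ∀ t ∈ Ioo a b, Tv t j = 0)
    (hφ : HasDerivAt φ d s) (hd : d ≠ 0)
    (hX03 : X s 0 3 = 0) :
    Z s 3 0 = 0 ∧ Z s 3 i = 0 := by
  have hnb : Ioo a b ∈ nhds s := isOpen_Ioo.mem_nhds hs
  -- first equation
  have eqI : Z s 3 0 * Real.cos (φ s) + Z s 3 i * Real.sin (φ s) = 0 := by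
    have h := hZZ horth s 3 0
    rw [if_neg (by decide)] at h
    have hsum : ∑ k, Z s 3 k * Z s 0 k
        = ∑ k ∈ ({0, i} : Finset (Fin 4)), Z s 3 k * Z s 0 k := by
      refine (Finset.sum_subset (Finset.subset_univ _) ?_).symm
      intro x _ hx
      simp only [Finset.mem_insert, Finset.mem_singleton, not_or] at hx
      rw [hrow0, hTj x hx.1 hx.2 s hs, mul_zero]
    rw [hsum, Finset.sum_pair (Ne.symm hi)] at h
    rwa [hrow0, hrow0, hT0 s hs, hTi s hs] at h
  -- derivative of row 0 entries
  have hTd : ∀ k, deriv (fun t => Tv t k) s = (X s * Z s) 0 k := by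
    intro k
    have : (fun t => Tv t k) = fun t => Z t 0 k := funext fun t => (hrow0 t k).symm
    rw [this, hde s 0 k]
  -- second equation
  have eqII : Z s 3 0 * (-Real.sin (φ s) * d) + Z s 3 i * (Real.cos (φ s) * d) = 0 := by
    have hsum0 : ∑ k, Z s 3 k * deriv (fun t => Tv t k) s = 0 := by
      have : ∑ k, Z s 3 k * deriv (fun t => Tv t k) s
          = ∑ k, (X s * Z s) 0 k * Z s 3 k := by
        refine Finset.sum_congr rfl fun k _ => ?_
        rw [hTd k, mul_comm]
      rw [this, sum_XZ_Z (X := X) horth s 0 3, hX03]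
    have hD0 : deriv (fun t => Tv t 0) s = -Real.sin (φ s) * d := by
      have h1 : HasDerivAt (fun t => Real.cos (φ t)) (-Real.sin (φ s) * d) s := hφ.cos
      have h2 : (fun t => Real.cos (φ t)) =ᶠ[nhds s] fun t => Tv t 0 := by
        filter_upwards [hnb] with t ht using (hT0 t ht).symm
      exact (h1.congr_of_eventuallyEq h2.symm).deriv
    have hDi : deriv (fun t => Tv t i) s = Real.cos (φ s) * d := by
      have h1 : HasDerivAt (fun t => Real.sin (φ t)) (Real.cos (φ s) * d) s := hφ.sin
      have h2 : (fun t => Real.sin (φ t)) =ᶠ[nhds s] fun t => Tv t i := by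
        filter_upwards [hnb] with t ht using (hTi t ht).symm
      exact (h1.congr_of_eventuallyEq h2.symm).deriv
    have hDj : ∀ j, j ≠ 0 → j ≠ i → deriv (fun t => Tv t j) s = 0 := by
      intro j hj0 hji
      have h2 : (fun t => (0:ℝ)) =ᶠ[nhds s] fun t => Tv t j := by
        filter_upwards [hnb] with t ht using (hTj j hj0 hji t ht).symm
      exact ((hasDerivAt_const s (0:ℝ)).congr_of_eventuallyEq h2.symm).deriv
    have hsum : ∑ k, Z s 3 k * deriv (fun t => Tv t k) s
        = ∑ k ∈ ({0, i} : Finset (Fin 4)), Z s 3 k * deriv (fun t => Tv t k) s := by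
      refine (Finset.sum_subset (Finset.subset_univ _) ?_).symm
      intro x _ hx
      simp only [Finset.mem_insert, Finset.mem_singleton, not_or] at hx
      rw [hDj x hx.1 hx.2, mul_zero]
    rw [hsum, Finset.sum_pair (Ne.symm hi), hD0, hDi] at hsum0
    exact hsum0
  -- solve the linear system
  have pyth : Real.sin (φ s) ^ 2 + Real.cos (φ s) ^ 2 = 1 := Real.sin_sq_add_cos_sq _
  have eqII' : -(Z s 3 0) * Real.sin (φ s) + Z s 3 i * Real.cos (φ s) = 0 := by
    have h : (-(Z s 3 0) * Real.sin (φ s) + Z s 3 i * Real.cos (φ s)) * d = 0 := by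
      linear_combination eqII
    rcases mul_eq_zero.1 h with h | h
    · exact h
    · exact absurd h hd
  constructor
  · have : Z s 3 0 = (Z s 3 0 * Real.cos (φ s) + Z s 3 i * Real.sin (φ s)) * Real.cos (φ s)
        - (-(Z s 3 0) * Real.sin (φ s) + Z s 3 i * Real.cos (φ s)) * Real.sin (φ s) := by
      linear_combination (-(Z s 3 0)) * pyth
    rw [eqI, eqII'] at this
    simpa using this
  · have : Z s 3 i = (Z s 3 0 * Real.cos (φ s) + Z s 3 i * Real.sin (φ s)) * Real.sin (φ s)
        + (-(Z s 3 0) * Real.sin (φ s) + Z s 3 i * Real.cos (φ s)) * Real.cos (φ s) := by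
      linear_combination (-(Z s 3 i)) * pyth
    rw [eqI, eqII'] at this
    simpa using this

end Key

lemma zero_at_right {f : ℝ → ℝ} (hf : Continuous f) {a b : ℝ} (hab : a < b)
    (h : ∀ t ∈ Ioo a b, f t = 0) : f b = 0 := by
  have hcl : closure (Ioo a b) ⊆ {x | f x = 0} :=
    closure_minimal h (isClosed_eq hf continuous_const)
  apply hcl
  rw [closure_Ioo hab.ne]
  exact ⟨hab.le, le_refl b⟩

lemma zero_at_left {f : ℝ → ℝ} (hf : Continuous f) {a b : ℝ} (hab : a < b)
    (h : ∀ t ∈ Ioo a b, f t = 0) : f a = 0 := by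
  have hcl : closure (Ioo a b) ⊆ {x | f x = 0} :=
    closure_minimal h (isClosed_eq hf continuous_const)
  apply hcl
  rw [closure_Ioo hab.ne]
  exact ⟨le_refl a, hab.le⟩

lemma const_on {f : ℝ → ℝ} (hf : Differentiable ℝ f) {a b : ℝ} (hab : a ≤ b)
    (h : ∀ x ∈ Icc a b, deriv f x = 0) : f b = f a := by
  rcases eq_or_lt_of_le hab with rfl | hab'
  · rfl
  refine constant_of_derivWithin_zero (hf.differentiableOn) ?_ b (right_mem_Icc.2 hab)
  intro x hx
  rw [(hf x).derivWithin (uniqueDiffOn_Icc hab' x (Ico_subset_Icc_self hx))]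
  exact h x (Ico_subset_Icc_self hx)

lemma ψ_dval_ne {u : ℝ} (h0 : 0 < u) (h1 : u < 1) (hu : u ≠ 1/2) :
    expNegInvGlue u * expNegInvGlue (1 - u) * ((u^2)⁻¹ - ((1-u)^2)⁻¹) ≠ 0 := by
  have p1 := expNegInvGlue.pos_of_pos h0
  have p2 := expNegInvGlue.pos_of_pos (by linarith : (0:ℝ) < 1 - u)
  have hne : (u^2)⁻¹ - ((1-u)^2)⁻¹ ≠ 0 := by
    intro h
    have hs2 : (0:ℝ) < u^2 := pow_pos h0 2
    have ht2 : (0:ℝ) < (1-u)^2 := pow_pos (by linarith) 2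
    have : u^2 = (1-u)^2 := by
      rw [sub_eq_zero, inv_inj] at h
      exact h
    have : u = 1 - u := by nlinarith
    apply hu; linarith
  exact mul_ne_zero (by positivity) hne

lemma TvI1 : ∀ t ∈ Ioo (-1/2 : ℝ) (0:ℝ),
    Tv t 0 = Real.cos (ψ (t + 1)) ∧ Tv t 1 = Real.sin (ψ (t + 1)) ∧
    Tv t 2 = 0 ∧ Tv t 3 = 0 := by
  intro t ht
  obtain ⟨h1, h2⟩ := ht
  have z0 : ψ (t - 4) = 0 := ψ_nonpos (by linarith)
  have z1 : ψ (t) = 0 := ψ_nonpos (by linarith)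
  have z2 : ψ (t - 1) = 0 := ψ_nonpos (by linarith)
  have z3 : ψ (t - 2) = 0 := ψ_nonpos (by linarith)
  have z4 : ψ (t - 3) = 0 := ψ_nonpos (by linarith)
  refine ⟨?_, ?_, ?_, ?_⟩ <;> simp [Tv, th1, th2, th3, z0, z1, z2, z3, z4]


lemma TvI2 : ∀ t ∈ Ioo (0:ℝ) (1/2:ℝ),
    Tv t 0 = Real.cos (ψ (t)) ∧ Tv t 2 = Real.sin (ψ (t)) ∧
    Tv t 1 = 0 ∧ Tv t 3 = 0 := by
  intro t ht
  obtain ⟨h1, h2⟩ := ht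
  have z0 : ψ (t + 1) = 0 := ψ_ge_one (by linarith)
  have z1 : ψ (t - 4) = 0 := ψ_nonpos (by linarith)
  have z2 : ψ (t - 1) = 0 := ψ_nonpos (by linarith)
  have z3 : ψ (t - 2) = 0 := ψ_nonpos (by linarith)
  have z4 : ψ (t - 3) = 0 := ψ_nonpos (by linarith)
  refine ⟨?_, ?_, ?_, ?_⟩ <;> simp [Tv, th1, th2, th3, z0, z1, z2, z3, z4]


lemma TvI3 : ∀ t ∈ Ioo (3/2:ℝ) (2:ℝ),
    Tv t 0 = Real.cos (ψ (t - 1)) ∧ Tv t 2 = Real.sin (ψ (t - 1)) ∧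
    Tv t 1 = 0 ∧ Tv t 3 = 0 := by
  intro t ht
  obtain ⟨h1, h2⟩ := ht
  have z0 : ψ (t + 1) = 0 := ψ_ge_one (by linarith)
  have z1 : ψ (t - 4) = 0 := ψ_nonpos (by linarith)
  have z2 : ψ (t) = 0 := ψ_ge_one (by linarith)
  have z3 : ψ (t - 2) = 0 := ψ_nonpos (by linarith)
  have z4 : ψ (t - 3) = 0 := ψ_nonpos (by linarith)
  refine ⟨?_, ?_, ?_, ?_⟩ <;> simp [Tv, th1, th2, th3, z0, z1, z2, z3, z4]


lemma TvI4 : ∀ t ∈ Ioo (2:ℝ) (5/2:ℝ),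
    Tv t 0 = Real.cos (ψ (t - 2)) ∧ Tv t 3 = Real.sin (ψ (t - 2)) ∧
    Tv t 1 = 0 ∧ Tv t 2 = 0 := by
  intro t ht
  obtain ⟨h1, h2⟩ := ht
  have z0 : ψ (t + 1) = 0 := ψ_ge_one (by linarith)
  have z1 : ψ (t - 4) = 0 := ψ_nonpos (by linarith)
  have z2 : ψ (t) = 0 := ψ_ge_one (by linarith)
  have z3 : ψ (t - 1) = 0 := ψ_ge_one (by linarith)
  have z4 : ψ (t - 3) = 0 := ψ_nonpos (by linarith)
  refine ⟨?_, ?_, ?_, ?_⟩ <;> simp [Tv, th1, th2, th3, z0, z1, z2, z3, z4]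


lemma TvI5 : ∀ t ∈ Ioo (7/2:ℝ) (4:ℝ),
    Tv t 0 = Real.cos (ψ (t - 3)) ∧ Tv t 3 = Real.sin (ψ (t - 3)) ∧
    Tv t 1 = 0 ∧ Tv t 2 = 0 := by
  intro t ht
  obtain ⟨h1, h2⟩ := ht
  have z0 : ψ (t + 1) = 0 := ψ_ge_one (by linarith)
  have z1 : ψ (t - 4) = 0 := ψ_nonpos (by linarith)
  have z2 : ψ (t) = 0 := ψ_ge_one (by linarith)
  have z3 : ψ (t - 1) = 0 := ψ_ge_one (by linarith)
  have z4 : ψ (t - 2) = 0 := ψ_ge_one (by linarith)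
  refine ⟨?_, ?_, ?_, ?_⟩ <;> simp [Tv, th1, th2, th3, z0, z1, z2, z3, z4]


lemma TvI6 : ∀ t ∈ Ioo (4:ℝ) (9/2:ℝ),
    Tv t 0 = Real.cos (ψ (t - 4)) ∧ Tv t 1 = Real.sin (ψ (t - 4)) ∧
    Tv t 2 = 0 ∧ Tv t 3 = 0 := by
  intro t ht
  obtain ⟨h1, h2⟩ := ht
  have z0 : ψ (t + 1) = 0 := ψ_ge_one (by linarith)
  have z1 : ψ (t) = 0 := ψ_ge_one (by linarith)
  have z2 : ψ (t - 1) = 0 := ψ_ge_one (by linarith)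
  have z3 : ψ (t - 2) = 0 := ψ_ge_one (by linarith)
  have z4 : ψ (t - 3) = 0 := ψ_ge_one (by linarith)
  refine ⟨?_, ?_, ?_, ?_⟩ <;> simp [Tv, th1, th2, th3, z0, z1, z2, z3, z4]

lemma contradiction_main (Z X : ℝ → Mat4)
    (hsm : ∀ i j, ContDiffOn ℝ (⊤ : ℕ∞) (fun s => Z s i j) univ)
    (horth : ∀ s : ℝ, Z s ∈ Matrix.orthogonalGroup (Fin 4) ℝ)
    (hde : ∀ s : ℝ, ∀ i j, deriv (fun t => Z t i j) s = (X s * Z s) i j)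
    (hrow0 : ∀ (s : ℝ) i, Z s 0 i = Tv s i)
    (hsh : ∀ s : ℝ, X s 0 3 = 0 ∧ X s 1 2 = 0 ∧ X s 2 3 = 0) : False := by
  have key1 : ∀ s ∈ Ioo (-1/2 : ℝ) (0:ℝ), Z s 3 0 = 0 ∧ Z s 3 1 = 0 := by
    intro s hs
    obtain ⟨hs1, hs2⟩ := hs
    refine key_zero hsm horth hde hrow0 (i := 1) (by decide)
      (φ := fun t => ψ (t + 1))
      (d := expNegInvGlue (s + 1) * expNegInvGlue (1 - (s + 1)) * (((s + 1)^2)⁻¹ - ((1 - (s + 1))^2)⁻¹))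
      (Set.mem_Ioo.2 ⟨hs1, hs2⟩)
      (fun t ht => (TvI1 t ht).1) (fun t ht => (TvI1 t ht).2.1) ?_ ?_ ?_ (hsh s).1
    · intro j hj0 hji t ht
      fin_cases j
      · exact absurd rfl hj0
      · exact absurd rfl hji
      · exact (TvI1 t ht).2.2.1
      · exact (TvI1 t ht).2.2.2
    · show HasDerivAt _ _ s
      have h := (ψ_hasDerivAt (show (0:ℝ) < s + 1 by linarith)
        (show (s + 1:ℝ) < 1 by linarith)).comp s ((hasDerivAt_id s).add_const 1)
      simpa [Function.comp_def] using h
    · exact ψ_dval_ne (by linarith) (by linarith) (by intro hq; norm_num at hq; linarith)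

  have key2 : ∀ s ∈ Ioo (0:ℝ) (1/2:ℝ), Z s 3 0 = 0 ∧ Z s 3 2 = 0 := by
    intro s hs
    obtain ⟨hs1, hs2⟩ := hs
    refine key_zero hsm horth hde hrow0 (i := 2) (by decide)
      (φ := fun t => ψ (t))
      (d := expNegInvGlue (s) * expNegInvGlue (1 - (s)) * (((s)^2)⁻¹ - ((1 - (s))^2)⁻¹))
      (Set.mem_Ioo.2 ⟨hs1, hs2⟩)
      (fun t ht => (TvI2 t ht).1) (fun t ht => (TvI2 t ht).2.1) ?_ ?_ ?_ (hsh s).1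
    · intro j hj0 hji t ht
      fin_cases j
      · exact absurd rfl hj0
      · exact (TvI2 t ht).2.2.1
      · exact absurd rfl hji
      · exact (TvI2 t ht).2.2.2
    · show HasDerivAt _ _ s
      exact ψ_hasDerivAt (by linarith) (by linarith)
    · exact ψ_dval_ne (by linarith) (by linarith) (by intro hq; norm_num at hq; linarith)

  have key3 : ∀ s ∈ Ioo (3/2:ℝ) (2:ℝ), Z s 3 0 = 0 ∧ Z s 3 2 = 0 := by
    intro s hs
    obtain ⟨hs1, hs2⟩ := hs
    refine key_zero hsm horth hde hrow0 (i := 2) (by decide)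
      (φ := fun t => ψ (t - 1))
      (d := expNegInvGlue (s - 1) * expNegInvGlue (1 - (s - 1)) * (((s - 1)^2)⁻¹ - ((1 - (s - 1))^2)⁻¹))
      (Set.mem_Ioo.2 ⟨hs1, hs2⟩)
      (fun t ht => (TvI3 t ht).1) (fun t ht => (TvI3 t ht).2.1) ?_ ?_ ?_ (hsh s).1
    · intro j hj0 hji t ht
      fin_cases j
      · exact absurd rfl hj0
      · exact (TvI3 t ht).2.2.1
      · exact absurd rfl hji
      · exact (TvI3 t ht).2.2.2
    · show HasDerivAt _ _ s
      have h := (ψ_hasDerivAt (show (0:ℝ) < s - 1 by linarith)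
        (show (s - 1:ℝ) < 1 by linarith)).comp s ((hasDerivAt_id s).sub_const 1)
      simpa [Function.comp_def] using h
    · exact ψ_dval_ne (by linarith) (by linarith) (by intro hq; norm_num at hq; linarith)

  have key4 : ∀ s ∈ Ioo (2:ℝ) (5/2:ℝ), Z s 3 0 = 0 ∧ Z s 3 3 = 0 := by
    intro s hs
    obtain ⟨hs1, hs2⟩ := hs
    refine key_zero hsm horth hde hrow0 (i := 3) (by decide)
      (φ := fun t => ψ (t - 2))
      (d := expNegInvGlue (s - 2) * expNegInvGlue (1 - (s - 2)) * (((s - 2)^2)⁻¹ - ((1 - (s - 2))^2)⁻¹))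
      (Set.mem_Ioo.2 ⟨hs1, hs2⟩)
      (fun t ht => (TvI4 t ht).1) (fun t ht => (TvI4 t ht).2.1) ?_ ?_ ?_ (hsh s).1
    · intro j hj0 hji t ht
      fin_cases j
      · exact absurd rfl hj0
      · exact (TvI4 t ht).2.2.1
      · exact (TvI4 t ht).2.2.2
      · exact absurd rfl hji
    · show HasDerivAt _ _ s
      have h := (ψ_hasDerivAt (show (0:ℝ) < s - 2 by linarith)
        (show (s - 2:ℝ) < 1 by linarith)).comp s ((hasDerivAt_id s).sub_const 2)
      simpa [Function.comp_def] using h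
    · exact ψ_dval_ne (by linarith) (by linarith) (by intro hq; norm_num at hq; linarith)

  have key5 : ∀ s ∈ Ioo (7/2:ℝ) (4:ℝ), Z s 3 0 = 0 ∧ Z s 3 3 = 0 := by
    intro s hs
    obtain ⟨hs1, hs2⟩ := hs
    refine key_zero hsm horth hde hrow0 (i := 3) (by decide)
      (φ := fun t => ψ (t - 3))
      (d := expNegInvGlue (s - 3) * expNegInvGlue (1 - (s - 3)) * (((s - 3)^2)⁻¹ - ((1 - (s - 3))^2)⁻¹))
      (Set.mem_Ioo.2 ⟨hs1, hs2⟩)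
      (fun t ht => (TvI5 t ht).1) (fun t ht => (TvI5 t ht).2.1) ?_ ?_ ?_ (hsh s).1
    · intro j hj0 hji t ht
      fin_cases j
      · exact absurd rfl hj0
      · exact (TvI5 t ht).2.2.1
      · exact (TvI5 t ht).2.2.2
      · exact absurd rfl hji
    · show HasDerivAt _ _ s
      have h := (ψ_hasDerivAt (show (0:ℝ) < s - 3 by linarith)
        (show (s - 3:ℝ) < 1 by linarith)).comp s ((hasDerivAt_id s).sub_const 3)
      simpa [Function.comp_def] using h
    · exact ψ_dval_ne (by linarith) (by linarith) (by intro hq; norm_num at hq; linarith)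

  have key6 : ∀ s ∈ Ioo (4:ℝ) (9/2:ℝ), Z s 3 0 = 0 ∧ Z s 3 1 = 0 := by
    intro s hs
    obtain ⟨hs1, hs2⟩ := hs
    refine key_zero hsm horth hde hrow0 (i := 1) (by decide)
      (φ := fun t => ψ (t - 4))
      (d := expNegInvGlue (s - 4) * expNegInvGlue (1 - (s - 4)) * (((s - 4)^2)⁻¹ - ((1 - (s - 4))^2)⁻¹))
      (Set.mem_Ioo.2 ⟨hs1, hs2⟩)
      (fun t ht => (TvI6 t ht).1) (fun t ht => (TvI6 t ht).2.1) ?_ ?_ ?_ (hsh s).1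
    · intro j hj0 hji t ht
      fin_cases j
      · exact absurd rfl hj0
      · exact absurd rfl hji
      · exact (TvI6 t ht).2.2.1
      · exact (TvI6 t ht).2.2.2
    · show HasDerivAt _ _ s
      have h := (ψ_hasDerivAt (show (0:ℝ) < s - 4 by linarith)
        (show (s - 4:ℝ) < 1 by linarith)).comp s ((hasDerivAt_id s).sub_const 4)
      simpa [Function.comp_def] using h
    · exact ψ_dval_ne (by linarith) (by linarith) (by intro hq; norm_num at hq; linarith)

  have hc : ∀ (i j : Fin 4), Continuous fun s => Z s i j :=
    fun i j => (contDiffOn_univ.1 (hsm i j)).continuous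
  have hdiff : ∀ (i j : Fin 4), Differentiable ℝ fun s => Z s i j :=
    fun i j => (contDiffOn_univ.1 (hsm i j)).differentiable (by simp)
  have Z030 : Z 0 3 0 = 0 := zero_at_right (hc 3 0) (by norm_num) fun t ht => (key1 t ht).1
  have Z031 : Z 0 3 1 = 0 := zero_at_right (hc 3 1) (by norm_num) fun t ht => (key1 t ht).2
  have Z032 : Z 0 3 2 = 0 := zero_at_left (hc 3 2) (by norm_num) fun t ht => (key2 t ht).2
  have Z230 : Z 2 3 0 = 0 := zero_at_right (hc 3 0) (by norm_num) fun t ht => (key3 t ht).1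
  have Z232 : Z 2 3 2 = 0 := zero_at_right (hc 3 2) (by norm_num) fun t ht => (key3 t ht).2
  have Z233 : Z 2 3 3 = 0 := zero_at_left (hc 3 3) (by norm_num) fun t ht => (key4 t ht).2
  have Z430 : Z 4 3 0 = 0 := zero_at_right (hc 3 0) (by norm_num) fun t ht => (key5 t ht).1
  have Z433 : Z 4 3 3 = 0 := zero_at_right (hc 3 3) (by norm_num) fun t ht => (key5 t ht).2
  have Z431 : Z 4 3 1 = 0 := zero_at_left (hc 3 1) (by norm_num) fun t ht => (key6 t ht).2
  have hz := hZZ horth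
  have sum33 : ∀ s : ℝ, Z s 3 0 * Z s 3 0 + Z s 3 1 * Z s 3 1 + Z s 3 2 * Z s 3 2
      + Z s 3 3 * Z s 3 3 = 1 := by
    intro s; have := hz s 3 3; rwa [if_pos rfl, Fin.sum_univ_four] at this
  have sum23 : ∀ s : ℝ, Z s 2 0 * Z s 3 0 + Z s 2 1 * Z s 3 1 + Z s 2 2 * Z s 3 2
      + Z s 2 3 * Z s 3 3 = 0 := by
    intro s; have := hz s 2 3; rwa [if_neg (by decide), Fin.sum_univ_four] at this
  have sum22 : ∀ s : ℝ, Z s 2 0 * Z s 2 0 + Z s 2 1 * Z s 2 1 + Z s 2 2 * Z s 2 2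
      + Z s 2 3 * Z s 2 3 = 1 := by
    intro s; have := hz s 2 2; rwa [if_pos rfl, Fin.sum_univ_four] at this
  have hZ033 : Z 0 3 3 * Z 0 3 3 = 1 := by
    have := sum33 0; rw [Z030, Z031, Z032] at this; linarith
  have Z023 : Z 0 2 3 = 0 := by
    have h := sum23 0
    rw [Z030, Z031, Z032] at h
    simp only [mul_zero, zero_add, add_zero] at h
    rcases mul_eq_zero.1 h with h' | h'
    · exact h'
    · rw [h'] at hZ033; norm_num at hZ033
  have hskew := Xskew hsm horth hde
  have X21 : ∀ s : ℝ, X s 2 1 = 0 := fun s => by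
    have h1 := hskew s 1 2; have h2 := (hsh s).2.1; linarith
  have X22 : ∀ s : ℝ, X s 2 2 = 0 := fun s => by have := hskew s 2 2; linarith
  have hder2 : ∀ (s : ℝ) (k : Fin 4), deriv (fun t => Z t 2 k) s = X s 2 0 * Tv s k := by
    intro s k
    rw [hde s 2 k]
    rw [show (X s * Z s) 2 k = ∑ l, X s 2 l * Z s l k from Matrix.mul_apply]
    rw [Fin.sum_univ_four, X21 s, X22 s, (hsh s).2.2, hrow0]
    ring
  have Tv3zero : ∀ s : ℝ, s ≤ 2 → Tv s 3 = 0 := by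
    intro s hs
    have h3 : th3 s = 0 := by
      unfold th3; rw [ψ_nonpos (by linarith), ψ_nonpos (by linarith)]; ring
    simp [Tv, h3]
  have Tv2zero : ∀ s : ℝ, 2 ≤ s → Tv s 2 = 0 := by
    intro s hs
    have h2 : th2 s = 0 := by
      unfold th2; rw [ψ_ge_one (by linarith), ψ_ge_one (by linarith)]; ring
    simp [Tv, h2]
  have hc23 : Z 2 2 3 = Z 0 2 3 := by
    have := const_on (f := fun s => Z s 2 3) (hdiff 2 3) (by norm_num : (0:ℝ) ≤ 2)
      (fun x hx => by rw [hder2 x 3, Tv3zero x hx.2, mul_zero])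
    exact this
  have hc22 : Z 4 2 2 = Z 2 2 2 := by
    have := const_on (f := fun s => Z s 2 2) (hdiff 2 2) (by norm_num : (2:ℝ) ≤ 4)
      (fun x hx => by rw [hder2 x 2, Tv2zero x hx.1, mul_zero])
    exact this
  have hTv2 : Tv 2 0 = 1 ∧ Tv 2 1 = 0 ∧ Tv 2 2 = 0 ∧ Tv 2 3 = 0 := by
    have h1 : th1 2 = 0 := by
      unfold th1; rw [ψ_ge_one (by norm_num), ψ_nonpos (by norm_num)]; ring
    have h2 : th2 2 = 0 := by
      unfold th2; rw [ψ_ge_one (by norm_num), ψ_ge_one (by norm_num)]; ring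
    have h3 : th3 2 = 0 := by
      unfold th3; rw [ψ_nonpos (by norm_num), ψ_nonpos (by norm_num)]; ring
    refine ⟨?_, ?_, ?_, ?_⟩ <;> simp [Tv, h1, h2, h3]
  have hZ231 : Z 2 3 1 * Z 2 3 1 = 1 := by
    have := sum33 2; rw [Z230, Z232, Z233] at this; linarith
  have Z221 : Z 2 2 1 = 0 := by
    have h := sum23 2
    rw [Z230, Z232, Z233] at h
    simp only [mul_zero, zero_add, add_zero] at h
    rcases mul_eq_zero.1 h with h' | h'
    · exact h'
    · rw [h'] at hZ231; norm_num at hZ231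
  have Z220 : Z 2 2 0 = 0 := by
    have h := hz 2 2 0
    rw [if_neg (by decide), Fin.sum_univ_four] at h
    rw [hrow0 2 0, hrow0 2 1, hrow0 2 2, hrow0 2 3] at h
    rw [hTv2.1, hTv2.2.1, hTv2.2.2.1, hTv2.2.2.2] at h
    simp only [mul_zero, mul_one, zero_add, add_zero] at h
    exact h
  have Z223 : Z 2 2 3 = 0 := by rw [hc23]; exact Z023
  have hZ222 : Z 2 2 2 * Z 2 2 2 = 1 := by
    have := sum22 2; rw [Z220, Z221, Z223] at this; linarith
  have hZ432 : Z 4 3 2 * Z 4 3 2 = 1 := by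
    have := sum33 4; rw [Z430, Z431, Z433] at this; linarith
  have final : Z 4 2 2 * Z 4 3 2 = 0 := by
    have h := sum23 4
    rw [Z430, Z431, Z433] at h
    simp only [mul_zero, zero_add, add_zero] at h
    exact h
  have h422 : Z 4 2 2 * Z 4 2 2 = 1 := by rw [hc22]; exact hZ222
  nlinarith [final, h422, hZ432]

end Aux

/-- There is a regular curve on ℝ admitting no generalized Bishop frame of type C. -/
theorem exists_regular_no_typeC :
    ∃ γ : ℝ → E4, IsRegularCurve Set.univ γ ∧ ¬ AdmitsFrame ShapeC Set.univ γ := by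
  refine ⟨γc, ⟨contDiffOn_univ.2 γc_contDiff, fun s _ => γc_norm_deriv s⟩, ?_⟩
  rintro ⟨Z, X, ⟨hsm, horth, hrow0⟩, hde, hsh⟩
  refine contradiction_main Z X (fun i j => hsm i j) (fun s => horth s (mem_univ s))
    (fun s i j => hde s (mem_univ s) i j) (fun s i => ?_) (fun s => hsh s (mem_univ s))
  rw [hrow0 s (mem_univ s) i, γc_deriv_apply]
end
end

section
/- If a regular curve γ : I → ℝ⁴ parametrized by arc length admits a generalized Bishop frame of type F, then γ admits a generalized Bishop frame of type D. -/
noncomputable section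

open Set

/-- If a regular curve admits a generalized Bishop frame of type F, then it admits one of
type D. -/
theorem typeF_implies_typeD (I : Set ℝ) (hIopen : IsOpen I) (hIinterval : I.OrdConnected)
    (γ : ℝ → E4) (hγ : IsRegularCurve I γ) (hF : AdmitsFrame ShapeF I γ) :
    AdmitsFrame ShapeD I γ := by
  obtain ⟨Z, X, ⟨hZs, hZo, hZr⟩, hZX, hXsh⟩ := hF
  rcases I.eq_empty_or_nonempty with hI | ⟨a, ha⟩
  · subst hI
    exact ⟨Z, X, ⟨hZs, hZo, hZr⟩, hZX, fun s hs => hs.elim⟩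
  -- entrywise differentiability
  have hZdiffAt : ∀ (i j : Fin 4), ∀ s ∈ I, HasDerivAt (fun t => Z t i j) ((X s * Z s) i j) s := by
    intro i j s hs
    have h1 : DifferentiableAt ℝ (fun t => Z t i j) s :=
      ((hZs i j).differentiableOn (by simp)).differentiableAt
        (hIopen.mem_nhds hs)
    rw [← hZX s hs i j]
    exact h1.hasDerivAt
  -- orthogonality in star form
  have hZZs : ∀ s ∈ I, Z s * star (Z s) = 1 := fun s hs =>
    (Matrix.mem_orthogonalGroup_iff _ _).mp (hZo s hs)
  -- skew-symmetry of X on I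
  have hskew : ∀ s ∈ I, ∀ i j : Fin 4, X s j i = - X s i j := by
    intro s hs i j
    have hfd : HasDerivAt (fun t => ∑ m, Z t i m * Z t j m)
        (∑ m, ((X s * Z s) i m * Z s j m + Z s i m * (X s * Z s) j m)) s :=
      HasDerivAt.fun_sum fun m _ => (hZdiffAt i m s hs).mul (hZdiffAt j m s hs)
    have hconst : ∀ t ∈ I, (∑ m, Z t i m * Z t j m) = (1 : Mat4) i j := by
      intro t ht
      have h1 : (Z t * star (Z t)) i j = (1 : Mat4) i j := by rw [hZZs t ht]
      simpa [Matrix.mul_apply, Matrix.star_apply] using h1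
    have hzero : deriv (fun t => ∑ m, Z t i m * Z t j m) s = 0 := by
      have hev : (fun t => ∑ m, Z t i m * Z t j m) =ᶠ[nhds s] fun _ => (1 : Mat4) i j :=
        Filter.eventuallyEq_of_mem (hIopen.mem_nhds hs) hconst
      rw [hev.deriv_eq]
      exact deriv_const _ _
    have hsum : (∑ m, ((X s * Z s) i m * Z s j m + Z s i m * (X s * Z s) j m)) = 0 := by
      rw [← hfd.deriv, hzero]
    have e1 : ∑ m, (X s * Z s) i m * Z s j m = X s i j := by
      have h1 : ((X s * Z s) * star (Z s)) i j = X s i j := by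
        rw [mul_assoc, hZZs s hs, mul_one]
      simpa [Matrix.mul_apply, Matrix.star_apply] using h1
    have e2 : ∑ m, Z s i m * (X s * Z s) j m = X s j i := by
      have h1 : ((X s * Z s) * star (Z s)) j i = X s j i := by
        rw [mul_assoc, hZZs s hs, mul_one]
      rw [show (∑ m, Z s i m * (X s * Z s) j m)
          = ∑ m, (X s * Z s) j m * Z s i m from
        Finset.sum_congr rfl fun m _ => mul_comm _ _]
      simpa [Matrix.mul_apply, Matrix.star_apply] using h1
    rw [Finset.sum_add_distrib, e1, e2] at hsum
    linarith
  -- the curvature function κ = X₂₃, expressed smoothly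
  set κ : ℝ → ℝ := fun s => ∑ m, deriv (fun t => Z t 2 m) s * Z s 3 m with hκdef
  have hκ : ∀ s ∈ I, κ s = X s 2 3 := by
    intro s hs
    have e1 : ∑ m, (X s * Z s) 2 m * Z s 3 m = X s 2 3 := by
      have h1 : ((X s * Z s) * star (Z s)) 2 3 = X s 2 3 := by
        rw [mul_assoc, hZZs s hs, mul_one]
      simpa [Matrix.mul_apply, Matrix.star_apply] using h1
    rw [hκdef]
    simp only
    rw [← e1]
    exact Finset.sum_congr rfl fun m _ => by rw [hZX s hs 2 m]
  have hκsm : ContDiffOn ℝ ((⊤:ℕ∞) : WithTop ℕ∞) κ I := by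
    apply ContDiffOn.sum
    intro m _
    exact (ContDiffOn.deriv_of_isOpen (hZs 2 m) hIopen (by norm_num)).mul (hZs 3 m)
  have hκcont : ContinuousOn κ I := hκsm.continuousOn
  -- antiderivative θ of κ
  set g := I.indicator κ with hgdef
  have hgI : EqOn g κ I := fun x hx => indicator_of_mem hx κ
  have hgcont : ContinuousOn g I := hκcont.congr hgI
  set θ : ℝ → ℝ := fun s => ∫ t in a..s, g t with hθdef
  have hθd : ∀ s ∈ I, HasDerivAt θ (κ s) s := by
    intro s hs
    have hsub : uIcc a s ⊆ I := hIinterval.uIcc_subset ha hs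
    have hint : IntervalIntegrable g MeasureTheory.volume a s :=
      (hgcont.mono hsub).intervalIntegrable
    have hmeas : StronglyMeasurableAtFilter g (nhds s) MeasureTheory.volume :=
      ⟨I, hIopen.mem_nhds hs, hgcont.aestronglyMeasurable hIopen.measurableSet⟩
    have hca : ContinuousAt g s := hgcont.continuousAt (hIopen.mem_nhds hs)
    have h1 := intervalIntegral.integral_hasDerivAt_right hint hmeas hca
    rw [hgI hs] at h1
    exact h1
  have hθsm : ContDiffOn ℝ ((⊤:ℕ∞) : WithTop ℕ∞) θ I := by
    apply contDiffOn_infty.mpr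
    intro n
    induction n with
    | zero =>
      exact contDiffOn_zero.mpr fun s hs =>
        ((hθd s hs).differentiableAt.continuousAt).continuousWithinAt
    | succ n ih =>
      have : ContDiffOn ℝ ((n : WithTop ℕ∞) + 1) θ I := by
        rw [contDiffOn_succ_iff_deriv_of_isOpen hIopen]
        refine ⟨fun s hs => (hθd s hs).differentiableAt.differentiableWithinAt,
          fun h => absurd h (by simp), ?_⟩
        exact (hκsm.of_le (by exact_mod_cast le_top)).congr fun s hs => (hθd s hs).deriv
      exact_mod_cast this
  have hcos : ContDiffOn ℝ ((⊤:ℕ∞) : WithTop ℕ∞) (fun s => Real.cos (θ s)) I :=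
    Real.contDiff_cos.comp_contDiffOn hθsm
  have hsin : ContDiffOn ℝ ((⊤:ℕ∞) : WithTop ℕ∞) (fun s => Real.sin (θ s)) I :=
    Real.contDiff_sin.comp_contDiffOn hθsm
  -- rotation matrix and new frame
  set R : ℝ → Mat4 := fun t => Matrix.of fun i j =>
    if i = 0 then (if j = 0 then (1:ℝ) else 0) else
    if i = 1 then (if j = 1 then 1 else 0) else
    if i = 2 then (if j = 2 then Real.cos (θ t) else if j = 3 then -Real.sin (θ t) else 0)
    else (if j = 2 then Real.sin (θ t) else if j = 3 then Real.cos (θ t) else 0) with hRdef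
  set W : ℝ → Mat4 := fun t => Matrix.of fun i j =>
    if i = 0 then Z t 0 j else
    if i = 1 then Z t 1 j else
    if i = 2 then Real.cos (θ t) * Z t 2 j - Real.sin (θ t) * Z t 3 j
    else Real.sin (θ t) * Z t 2 j + Real.cos (θ t) * Z t 3 j with hWdef
  set Y : ℝ → Mat4 := fun s => Matrix.of fun i j =>
    if i = 0 then (if j = 1 then X s 0 1 else 0)
    else if i = 1 then (if j = 0 then -X s 0 1 else if j = 2 then X s 1 2 * Real.cos (θ s)
      else if j = 3 then X s 1 2 * Real.sin (θ s) else 0)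
    else if i = 2 then (if j = 1 then -(X s 1 2 * Real.cos (θ s)) else 0)
    else (if j = 1 then -(X s 1 2 * Real.sin (θ s)) else 0) with hYdef
  have hWRZ : ∀ t, W t = R t * Z t := by
    intro t
    ext i j
    fin_cases i <;>
      simp [hWdef, hRdef, Matrix.mul_apply, Fin.sum_univ_four, Fin.reduceEq, if_true, if_false] <;>
      ring
  have hRo : ∀ t, R t ∈ Matrix.orthogonalGroup (Fin 4) ℝ := by
    intro t
    rw [Matrix.mem_orthogonalGroup_iff]
    ext i j
    fin_cases i <;> fin_cases j <;>
      simp [hRdef, Matrix.mul_apply, Fin.sum_univ_four, Matrix.star_apply, Matrix.one_apply,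
        Fin.reduceEq, if_true, if_false] <;>
      nlinarith [Real.sin_sq_add_cos_sq (θ t)]
  refine ⟨W, Y, ⟨?_, ?_, ?_⟩, ?_, ?_⟩
  · -- SmoothMat
    intro i j
    fin_cases i
    · exact (hZs 0 j).congr fun s _ => rfl
    · exact (hZs 1 j).congr fun s _ => rfl
    · exact ((hcos.mul (hZs 2 j)).sub (hsin.mul (hZs 3 j))).congr fun s _ => rfl
    · exact ((hsin.mul (hZs 2 j)).add (hcos.mul (hZs 3 j))).congr fun s _ => rfl
  · -- orthogonal
    intro s hs
    rw [hWRZ s]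
    exact mul_mem (hRo s) (hZo s hs)
  · -- first row
    intro s hs i
    exact hZr s hs i
  · -- MatDerivEq
    intro s hs i j
    obtain ⟨h02, h03, h13⟩ := hXsh s hs
    have h00 : X s 0 0 = 0 := by have := hskew s hs 0 0; linarith
    have h11 : X s 1 1 = 0 := by have := hskew s hs 1 1; linarith
    have h22 : X s 2 2 = 0 := by have := hskew s hs 2 2; linarith
    have h33 : X s 3 3 = 0 := by have := hskew s hs 3 3; linarith
    have h10 : X s 1 0 = -X s 0 1 := hskew s hs 0 1
    have h20 : X s 2 0 = 0 := by rw [hskew s hs 0 2, h02, neg_zero]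
    have h30 : X s 3 0 = 0 := by rw [hskew s hs 0 3, h03, neg_zero]
    have h21 : X s 2 1 = -X s 1 2 := hskew s hs 1 2
    have h31 : X s 3 1 = 0 := by rw [hskew s hs 1 3, h13, neg_zero]
    have h32 : X s 3 2 = -X s 2 3 := hskew s hs 2 3
    have hθs : HasDerivAt θ (X s 2 3) s := by rw [← hκ s hs]; exact hθd s hs
    have hc : HasDerivAt (fun t => Real.cos (θ t)) (-Real.sin (θ s) * X s 2 3) s := hθs.cos
    have hsn : HasDerivAt (fun t => Real.sin (θ t)) (Real.cos (θ s) * X s 2 3) s := hθs.sin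
    fin_cases i
    · -- row 0
      show deriv (fun t => W t 0 j) s = (Y s * W s) 0 j
      have hL : deriv (fun t => W t 0 j) s = (X s * Z s) 0 j := by
        have : (fun t => W t 0 j) = fun t => Z t 0 j := rfl
        rw [this, hZX s hs 0 j]
      rw [hL]
      simp only [hYdef, hWdef, Matrix.mul_apply, Fin.sum_univ_four, Matrix.of_apply,
        Fin.reduceEq, if_true, if_false, h00, h02, h03]
      ring
    · -- row 1
      show deriv (fun t => W t 1 j) s = (Y s * W s) 1 j
      have hL : deriv (fun t => W t 1 j) s = (X s * Z s) 1 j := by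
        have : (fun t => W t 1 j) = fun t => Z t 1 j := rfl
        rw [this, hZX s hs 1 j]
      rw [hL]
      simp only [hYdef, hWdef, Matrix.mul_apply, Fin.sum_univ_four, Matrix.of_apply,
        Fin.reduceEq, if_true, if_false, h10, h11, h13]
      linear_combination (-(X s 1 2 * Z s 2 j)) * Real.sin_sq_add_cos_sq (θ s)
    · -- row 2
      show deriv (fun t => W t 2 j) s = (Y s * W s) 2 j
      have hd : HasDerivAt (fun t => W t 2 j)
          ((-Real.sin (θ s) * X s 2 3) * Z s 2 j + Real.cos (θ s) * ((X s * Z s) 2 j)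
            - ((Real.cos (θ s) * X s 2 3) * Z s 3 j + Real.sin (θ s) * ((X s * Z s) 3 j))) s := by
        have : (fun t => W t 2 j)
            = fun t => Real.cos (θ t) * Z t 2 j - Real.sin (θ t) * Z t 3 j := rfl
        rw [this]
        exact (hc.mul (hZdiffAt 2 j s hs)).sub (hsn.mul (hZdiffAt 3 j s hs))
      rw [hd.deriv]
      simp only [hYdef, hWdef, Matrix.mul_apply, Fin.sum_univ_four, Matrix.of_apply,
        Fin.reduceEq, if_true, if_false, h20, h21, h22, h30, h31, h32, h33]
      ring
    · -- row 3
      show deriv (fun t => W t 3 j) s = (Y s * W s) 3 j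
      have hd : HasDerivAt (fun t => W t 3 j)
          ((Real.cos (θ s) * X s 2 3) * Z s 2 j + Real.sin (θ s) * ((X s * Z s) 2 j)
            + ((-Real.sin (θ s) * X s 2 3) * Z s 3 j + Real.cos (θ s) * ((X s * Z s) 3 j))) s := by
        have : (fun t => W t 3 j)
            = fun t => Real.sin (θ t) * Z t 2 j + Real.cos (θ t) * Z t 3 j := rfl
        rw [this]
        exact (hsn.mul (hZdiffAt 2 j s hs)).add (hc.mul (hZdiffAt 3 j s hs))
      rw [hd.deriv]
      simp only [hYdef, hWdef, Matrix.mul_apply, Fin.sum_univ_four, Matrix.of_apply,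
        Fin.reduceEq, if_true, if_false, h20, h21, h22, h30, h31, h32, h33]
      ring
  · -- ShapeD
    intro s hs
    exact ⟨rfl, rfl, rfl⟩
end
end

section
/- Let γ : I → ℝ⁴ be a 2-regular curve parametrized by arc length admitting an orthonormal frame of type F whose coefficient matrix has above-diagonal entries X₁₂ = f₁, X₂₃ = f₂, X₃₄ = f₃ (all other above-diagonal entries zero), where f₁, f₂, f₃ : I → ℝ are smooth. Then for any smooth θ : I → ℝ with θ'(s) = −f₃(s) for all s, the curve γ admits an orthonormal frame of type D whose coefficient matrix has above-diagonal entries X₁₂ = f₁(s), X₂₃ = f₂(s)·cos θ(s), X₂₄ = f₂(s)·sin θ(s) (all other above-diagonal entries zero). -/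
noncomputable section

open Set

set_option maxHeartbeats 1000000 in
/-- From a frame of type F with curvatures f₁, f₂, f₃ one obtains, for any antiderivative θ
of −f₃, a frame of type D with curvatures f₁, f₂·cos θ, f₂·sin θ. -/
theorem typeF_to_typeD_curvatures (I : Set ℝ) (hIopen : IsOpen I)
    (hIinterval : I.OrdConnected) (γ : ℝ → E4) (hγ : IsTwoRegularCurve I γ)
    (f₁ f₂ f₃ : ℝ → ℝ)
    (hf₁ : ContDiffOn ℝ (⊤ : ℕ∞) f₁ I) (hf₂ : ContDiffOn ℝ (⊤ : ℕ∞) f₂ I)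
    (hf₃ : ContDiffOn ℝ (⊤ : ℕ∞) f₃ I)
    (Z X : ℝ → Mat4) (hZ : IsFrameOn I γ Z) (hZX : MatDerivEq I Z X)
    (hshape : ∀ s ∈ I, ShapeF (X s))
    (hX12 : ∀ s ∈ I, X s 0 1 = f₁ s) (hX23 : ∀ s ∈ I, X s 1 2 = f₂ s)
    (hX34 : ∀ s ∈ I, X s 2 3 = f₃ s)
    (θ : ℝ → ℝ) (hθ : ContDiffOn ℝ (⊤ : ℕ∞) θ I) (hθ' : ∀ s ∈ I, deriv θ s = -f₃ s) :
    ∃ W Y : ℝ → Mat4, IsFrameOn I γ W ∧ MatDerivEq I W Y ∧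
      (∀ s ∈ I, ShapeD (Y s)) ∧
      (∀ s ∈ I, Y s 0 1 = f₁ s) ∧
      (∀ s ∈ I, Y s 1 2 = f₂ s * Real.cos (θ s)) ∧
      (∀ s ∈ I, Y s 1 3 = f₂ s * Real.sin (θ s)) := by

  classical
  set R : ℝ → Mat4 := fun s =>
    !![1, 0, 0, 0; 0, 1, 0, 0; 0, 0, Real.cos (θ s), Real.sin (θ s);
       0, 0, Real.sin (θ s), -Real.cos (θ s)] with hR
  set R' : ℝ → Mat4 := fun s =>
    !![0, 0, 0, 0; 0, 0, 0, 0; 0, 0, f₃ s * Real.sin (θ s), -(f₃ s * Real.cos (θ s));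
       0, 0, -(f₃ s * Real.cos (θ s)), -(f₃ s * Real.sin (θ s))] with hR'
  set Y : ℝ → Mat4 := fun s =>
    !![0, f₁ s, 0, 0;
       -f₁ s, 0, f₂ s * Real.cos (θ s), f₂ s * Real.sin (θ s);
       0, -(f₂ s * Real.cos (θ s)), 0, 0;
       0, -(f₂ s * Real.sin (θ s)), 0, 0] with hY
  set W : ℝ → Mat4 := fun s => R s * Z s with hW
  have hZd : ∀ s ∈ I, ∀ k j, HasDerivAt (fun t => Z t k j) ((X s * Z s) k j) s := by
    intro s hs k j
    have h := (((hZ.1 k j).differentiableOn (by simp)).differentiableAt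
      (hIopen.mem_nhds hs)).hasDerivAt
    rwa [hZX s hs k j] at h
  have horth : ∀ s ∈ I, ∀ i j, (∑ k, Z s i k * Z s j k) = (1 : Mat4) i j := by
    intro s hs i j
    have h := (Matrix.mem_orthogonalGroup_iff _ _).mp (hZ.2.1 s hs)
    calc (∑ k, Z s i k * Z s j k) = (Z s * star (Z s)) i j := by
          simp [Matrix.mul_apply, Matrix.star_apply]
      _ = (1 : Mat4) i j := by
        rw [Matrix.star_eq_conjTranspose, Matrix.conjTranspose_eq_transpose_of_trivial, h]
  have hskew : ∀ s ∈ I, ∀ i j, X s i j + X s j i = 0 := by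
    intro s hs i j
    have hd : HasDerivAt (fun t => ∑ k, Z t i k * Z t j k)
        (∑ k, ((X s * Z s) i k * Z s j k + Z s i k * (X s * Z s) j k)) s :=
      HasDerivAt.fun_sum (fun k _ => (hZd s hs i k).mul (hZd s hs j k))
    have hconst : deriv (fun t => ∑ k, Z t i k * Z t j k) s = 0 := by
      have hev : (fun t => ∑ k, Z t i k * Z t j k) =ᶠ[nhds s]
          (fun _ => (1 : Mat4) i j) :=
        Filter.eventuallyEq_of_mem (hIopen.mem_nhds hs) (fun t ht => horth t ht i j)
      rw [hev.deriv_eq]; simp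
    have hz : (∑ k, ((X s * Z s) i k * Z s j k + Z s i k * (X s * Z s) j k)) = 0 := by
      rw [← hd.deriv, hconst]
    have h1 : ∀ a b : Fin 4, (∑ k, (X s * Z s) a k * Z s b k) = X s a b := by
      intro a b
      calc (∑ k, (X s * Z s) a k * Z s b k)
          = ∑ k, ∑ l, X s a l * (Z s l k * Z s b k) := by
            simp [Matrix.mul_apply, Finset.sum_mul, mul_assoc]
        _ = ∑ l, X s a l * ∑ k, Z s l k * Z s b k := by
            rw [Finset.sum_comm]; simp [Finset.mul_sum]
        _ = ∑ l, X s a l * (1 : Mat4) l b := by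
            refine Finset.sum_congr rfl fun l _ => by rw [horth s hs l b]
        _ = X s a b := by simp [Matrix.one_apply]
    have h2 : (∑ k, Z s i k * (X s * Z s) j k) = X s j i := by
      rw [← h1 j i]; exact Finset.sum_congr rfl fun k _ => mul_comm _ _
    rw [Finset.sum_add_distrib, h1 i j, h2] at hz
    exact hz
  have e00 : ∀ s ∈ I, X s 0 0 = 0 := fun s hs => by have := hskew s hs 0 0; linarith
  have e11 : ∀ s ∈ I, X s 1 1 = 0 := fun s hs => by have := hskew s hs 1 1; linarith
  have e22 : ∀ s ∈ I, X s 2 2 = 0 := fun s hs => by have := hskew s hs 2 2; linarith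
  have e33 : ∀ s ∈ I, X s 3 3 = 0 := fun s hs => by have := hskew s hs 3 3; linarith
  have e10 : ∀ s ∈ I, X s 1 0 = -f₁ s := fun s hs => by
    have := hskew s hs 0 1; rw [hX12 s hs] at this; linarith
  have e20 : ∀ s ∈ I, X s 2 0 = 0 := fun s hs => by
    have := hskew s hs 0 2; rw [(hshape s hs).1] at this; linarith
  have e21 : ∀ s ∈ I, X s 2 1 = -f₂ s := fun s hs => by
    have := hskew s hs 1 2; rw [hX23 s hs] at this; linarith
  have e30 : ∀ s ∈ I, X s 3 0 = 0 := fun s hs => by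
    have := hskew s hs 0 3; rw [(hshape s hs).2.1] at this; linarith
  have e31 : ∀ s ∈ I, X s 3 1 = 0 := fun s hs => by
    have := hskew s hs 1 3; rw [(hshape s hs).2.2] at this; linarith
  have e32 : ∀ s ∈ I, X s 3 2 = -f₃ s := fun s hs => by
    have := hskew s hs 2 3; rw [hX34 s hs] at this; linarith
  have hθd : ∀ s ∈ I, HasDerivAt θ (-f₃ s) s := by
    intro s hs
    have h := ((hθ.differentiableOn (by simp)).differentiableAt
      (hIopen.mem_nhds hs)).hasDerivAt
    rwa [hθ' s hs] at h
  have hRd : ∀ s ∈ I, ∀ i j, HasDerivAt (fun t => R t i j) (R' s i j) s := by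
    intro s hs i j
    have hc : HasDerivAt (fun t => Real.cos (θ t)) (f₃ s * Real.sin (θ s)) s := by
      have := (Real.hasDerivAt_cos (θ s)).comp s (hθd s hs)
      rw [show f₃ s * Real.sin (θ s) = -Real.sin (θ s) * -f₃ s by ring]; exact this
    have hsn : HasDerivAt (fun t => Real.sin (θ t)) (-(f₃ s * Real.cos (θ s))) s := by
      have := (Real.hasDerivAt_sin (θ s)).comp s (hθd s hs)
      rw [show -(f₃ s * Real.cos (θ s)) = Real.cos (θ s) * -f₃ s by ring]; exact this
    fin_cases i <;> fin_cases j <;>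
      simp [hR, hR', Matrix.vecHead, Matrix.vecTail] <;>
      first
        | exact hasDerivAt_const _ _
        | exact hc
        | exact hsn
        | exact hc.neg
        | exact hsn.neg
        | (convert hc.neg using 1; ring)
        | (convert hsn.neg using 1; ring)
  have hM : ∀ s ∈ I, R' s + R s * X s = Y s * R s := by
    intro s hs
    have h02 := (hshape s hs).1
    have h03 := (hshape s hs).2.1
    have h13 := (hshape s hs).2.2
    have hpy := Real.sin_sq_add_cos_sq (θ s)
    ext i j
    fin_cases i <;> fin_cases j <;>
      simp only [Matrix.add_apply, Matrix.mul_apply, Fin.sum_univ_four] <;>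
      simp [hR, hR', hY, Matrix.vecHead, Matrix.vecTail,
        e00 s hs, e11 s hs, e22 s hs, e33 s hs, e10 s hs, e20 s hs, e21 s hs,
        e30 s hs, e31 s hs, e32 s hs, h02, h03, h13, hX12 s hs, hX23 s hs, hX34 s hs] <;>
      first
        | linear_combination f₂ s * hpy
        | linear_combination -f₂ s * hpy
        | ring
  refine ⟨W, Y, ⟨?_, ?_, ?_⟩, ?_, ?_, ?_, ?_⟩
  · intro i j
    have hfun : (fun s => W s i j) = fun s => ∑ k, R s i k * Z s k j := by
      funext s; simp [hW, Matrix.mul_apply]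
    rw [hfun]
    apply ContDiffOn.sum
    intro k _
    refine ContDiffOn.mul ?_ (hZ.1 k j)
    fin_cases i <;> fin_cases k <;>
      simp [hR, Matrix.vecHead, Matrix.vecTail] <;>
      first
        | exact contDiffOn_const
        | exact hθ.cos
        | exact hθ.sin
        | exact hθ.cos.neg
        | exact hθ.sin.neg
  · intro s hs
    have hRo : R s ∈ Matrix.orthogonalGroup (Fin 4) ℝ := by
      rw [Matrix.mem_orthogonalGroup_iff]
      have hpy := Real.sin_sq_add_cos_sq (θ s)
      ext i j
      fin_cases i <;> fin_cases j <;>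
        simp only [Matrix.mul_apply, Fin.sum_univ_four, Matrix.star_apply, star_trivial] <;>
        simp [hR, Matrix.vecHead, Matrix.vecTail, Matrix.one_apply] <;>
        first
          | linear_combination hpy
          | linear_combination -hpy
          | ring
    exact mul_mem hRo (hZ.2.1 s hs)
  · intro s hs i
    have h0 : W s 0 i = Z s 0 i := by
      simp only [hW, Matrix.mul_apply, Fin.sum_univ_four]
      simp [hR, Matrix.vecHead, Matrix.vecTail]
    rw [h0]; exact hZ.2.2 s hs i
  · intro s hs i j
    have hd : HasDerivAt (fun t => W t i j)
        (∑ k, (R' s i k * Z s k j + R s i k * (X s * Z s) k j)) s := by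
      have hfun : (fun t => W t i j) = fun t => ∑ k, R t i k * Z t k j := by
        funext t; simp [hW, Matrix.mul_apply]
      rw [hfun]
      exact HasDerivAt.fun_sum (fun k _ => (hRd s hs i k).mul (hZd s hs k j))
    rw [hd.deriv]
    have hsum : (∑ k, (R' s i k * Z s k j + R s i k * (X s * Z s) k j))
        = ((R' s + R s * X s) * Z s) i j := by
      rw [Finset.sum_add_distrib, Matrix.add_mul, Matrix.add_apply, Matrix.mul_assoc]
      rw [Matrix.mul_apply (M := R' s) (N := Z s),
        Matrix.mul_apply (M := R s) (N := X s * Z s)]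
    rw [hsum, hM s hs, hW]
    rw [Matrix.mul_assoc]
  · intro s hs
    refine ⟨by simp [hY], by simp [hY], by simp [hY]⟩
  · intro s hs; simp [hY]
  · constructor <;> intro s hs <;> simp [hY]
end
end

section
/- Let γ : I → ℝ⁴ be a regular curve parametrized by arc length admitting an orthonormal frame of type B (a Bishop frame) whose coefficient matrix has above-diagonal entries X₁₂ = b₁, X₁₃ = b₂, X₁₄ = b₃, where b₁, b₂, b₃ : I → ℝ are smooth and (b₁(s), b₃(s)) ≠ (0,0) for all s ∈ I. Then γ admits an orthonormal frame of type C whose coefficient matrix has above-diagonal entries X₁₂ = √(b₁(s)² + b₃(s)²), X₁₃ = b₂(s), X₂₄ = (b₃'(s)·b₁(s) − b₃(s)·b₁'(s))/(b₁(s)² + b₃(s)²). -/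
noncomputable section

open Set

set_option maxHeartbeats 1000000 in
/-- From a Bishop frame with curvatures b₁, b₂, b₃ such that (b₁, b₃) never vanishes, one
obtains a frame of type C with the stated curvatures. -/
theorem typeB_to_typeC_curvatures (I : Set ℝ) (hIopen : IsOpen I)
    (hIinterval : I.OrdConnected) (γ : ℝ → E4) (hγ : IsRegularCurve I γ)
    (b₁ b₂ b₃ : ℝ → ℝ)
    (hb₁ : ContDiffOn ℝ (⊤ : ℕ∞) b₁ I) (hb₂ : ContDiffOn ℝ (⊤ : ℕ∞) b₂ I)
    (hb₃ : ContDiffOn ℝ (⊤ : ℕ∞) b₃ I)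
    (hne : ∀ s ∈ I, (b₁ s, b₃ s) ≠ (0, 0))
    (Z X : ℝ → Mat4) (hZ : IsFrameOn I γ Z) (hZX : MatDerivEq I Z X)
    (hshape : ∀ s ∈ I, ShapeB (X s))
    (hX12 : ∀ s ∈ I, X s 0 1 = b₁ s) (hX13 : ∀ s ∈ I, X s 0 2 = b₂ s)
    (hX14 : ∀ s ∈ I, X s 0 3 = b₃ s) :
    ∃ W Y : ℝ → Mat4, IsFrameOn I γ W ∧ MatDerivEq I W Y ∧
      (∀ s ∈ I, ShapeC (Y s)) ∧
      (∀ s ∈ I, Y s 0 1 = Real.sqrt (b₁ s ^ 2 + b₃ s ^ 2)) ∧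
      (∀ s ∈ I, Y s 0 2 = b₂ s) ∧
      (∀ s ∈ I, Y s 1 3 =
        (deriv b₃ s * b₁ s - b₃ s * deriv b₁ s) / (b₁ s ^ 2 + b₃ s ^ 2)) := by
  obtain ⟨hZs, hZo, hZr⟩ := hZ
  have hone : ((⊤ : ℕ∞) : WithTop ℕ∞) ≠ 0 := by simp
  have hq : ∀ s ∈ I, 0 < b₁ s ^ 2 + b₃ s ^ 2 := by
    intro s hs
    rcases em (b₁ s = 0) with h | h
    · have h3 : b₃ s ≠ 0 := fun h3 => hne s hs (by simp [h, h3])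
      positivity
    · positivity
  set r : ℝ → ℝ := fun t => Real.sqrt (b₁ t ^ 2 + b₃ t ^ 2) with hrdef
  have hrpos : ∀ s ∈ I, 0 < r s := fun s hs => Real.sqrt_pos.mpr (hq s hs)
  have hrne : ∀ s ∈ I, r s ≠ 0 := fun s hs => ne_of_gt (hrpos s hs)
  have hrsq : ∀ s ∈ I, r s ^ 2 = b₁ s ^ 2 + b₃ s ^ 2 := fun s hs =>
    Real.sq_sqrt (le_of_lt (hq s hs))
  set c : ℝ → ℝ := fun t => b₁ t / r t with hcdef
  set σ : ℝ → ℝ := fun t => b₃ t / r t with hσdef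
  set ω : ℝ → ℝ := fun t =>
    (deriv b₃ t * b₁ t - b₃ t * deriv b₁ t) / (b₁ t ^ 2 + b₃ t ^ 2) with hωdef
  set Rm : ℝ → Mat4 := fun t =>
    !![1, 0, 0, 0; 0, c t, 0, σ t; 0, 0, 1, 0; 0, -σ t, 0, c t] with hRmdef
  set W : ℝ → Mat4 := fun t => Rm t * Z t with hWdef
  set Y : ℝ → Mat4 := fun t =>
    !![0, r t, b₂ t, 0; -r t, 0, 0, ω t; -b₂ t, 0, 0, 0; 0, -ω t, 0, 0] with hYdef
  have hW0 : ∀ t j, W t 0 j = Z t 0 j := by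
    intro t j; simp [hWdef, hRmdef, Matrix.mul_apply, Fin.sum_univ_four, Matrix.vecMul, dotProduct]
  have hW1 : ∀ t j, W t 1 j = c t * Z t 1 j + σ t * Z t 3 j := by
    intro t j; simp [hWdef, hRmdef, Matrix.mul_apply, Fin.sum_univ_four, Matrix.vecMul, dotProduct]
  have hW2 : ∀ t j, W t 2 j = Z t 2 j := by
    intro t j; simp [hWdef, hRmdef, Matrix.mul_apply, Fin.sum_univ_four, Matrix.vecMul, dotProduct]
  have hW3 : ∀ t j, W t 3 j = -σ t * Z t 1 j + c t * Z t 3 j := by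
    intro t j; simp [hWdef, hRmdef, Matrix.mul_apply, Fin.sum_univ_four, Matrix.vecMul, dotProduct]
  have hY00 : ∀ t, Y t 0 0 = 0 := fun t => by simp [hYdef, Matrix.vecHead, Matrix.vecTail]
  have hY01 : ∀ t, Y t 0 1 = r t := fun t => by simp [hYdef, Matrix.vecHead, Matrix.vecTail]
  have hY02 : ∀ t, Y t 0 2 = b₂ t := fun t => by simp [hYdef, Matrix.vecHead, Matrix.vecTail]
  have hY03 : ∀ t, Y t 0 3 = 0 := fun t => by simp [hYdef, Matrix.vecHead, Matrix.vecTail]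
  have hY10 : ∀ t, Y t 1 0 = -r t := fun t => by simp [hYdef, Matrix.vecHead, Matrix.vecTail]
  have hY11 : ∀ t, Y t 1 1 = 0 := fun t => by simp [hYdef, Matrix.vecHead, Matrix.vecTail]
  have hY12 : ∀ t, Y t 1 2 = 0 := fun t => by simp [hYdef, Matrix.vecHead, Matrix.vecTail]
  have hY13 : ∀ t, Y t 1 3 = ω t := fun t => by simp [hYdef, Matrix.vecHead, Matrix.vecTail]
  have hY20 : ∀ t, Y t 2 0 = -b₂ t := fun t => by simp [hYdef, Matrix.vecHead, Matrix.vecTail]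
  have hY21 : ∀ t, Y t 2 1 = 0 := fun t => by simp [hYdef, Matrix.vecHead, Matrix.vecTail]
  have hY22 : ∀ t, Y t 2 2 = 0 := fun t => by simp [hYdef, Matrix.vecHead, Matrix.vecTail]
  have hY23 : ∀ t, Y t 2 3 = 0 := fun t => by simp [hYdef, Matrix.vecHead, Matrix.vecTail]
  have hY30 : ∀ t, Y t 3 0 = 0 := fun t => by simp [hYdef, Matrix.vecHead, Matrix.vecTail]
  have hY31 : ∀ t, Y t 3 1 = -ω t := fun t => by simp [hYdef, Matrix.vecHead, Matrix.vecTail]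
  have hY32 : ∀ t, Y t 3 2 = 0 := fun t => by simp [hYdef, Matrix.vecHead, Matrix.vecTail]
  have hY33 : ∀ t, Y t 3 3 = 0 := fun t => by simp [hYdef, Matrix.vecHead, Matrix.vecTail]
  -- algebra helpers
  have hrc : ∀ s ∈ I, r s * c s = b₁ s := by
    intro s hs; have h0 := hrne s hs; simp only [hcdef]; field_simp
  have hrσ : ∀ s ∈ I, r s * σ s = b₃ s := by
    intro s hs; have h0 := hrne s hs; simp only [hσdef]; field_simp
  have hc2 : ∀ s ∈ I, c s ^ 2 + σ s ^ 2 = 1 := by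
    intro s hs; have h0 := hrne s hs; simp only [hcdef, hσdef]; field_simp
    linear_combination (hrsq s hs).symm
  have hcb : ∀ s ∈ I, c s * b₁ s + σ s * b₃ s = r s := by
    intro s hs; have h0 := hrne s hs; simp only [hcdef, hσdef]; field_simp
    linear_combination (hrsq s hs).symm
  have hsb : ∀ s ∈ I, σ s * b₁ s - c s * b₃ s = 0 := by
    intro s hs; have h0 := hrne s hs; simp only [hcdef, hσdef]; field_simp; ring
  -- smoothness
  have hrs : ContDiffOn ℝ (⊤ : ℕ∞) r I := by
    intro s hs
    have h1 : ContDiffAt ℝ (⊤ : ℕ∞) (fun t => b₁ t ^ 2 + b₃ t ^ 2) s :=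
      ((hb₁.contDiffAt (hIopen.mem_nhds hs)).pow 2).add
        ((hb₃.contDiffAt (hIopen.mem_nhds hs)).pow 2)
    exact ((Real.contDiffAt_sqrt (ne_of_gt (hq s hs))).comp s h1).contDiffWithinAt
  have hcs : ContDiffOn ℝ (⊤ : ℕ∞) c I := hb₁.div hrs fun s hs => hrne s hs
  have hσs : ContDiffOn ℝ (⊤ : ℕ∞) σ I := hb₃.div hrs fun s hs => hrne s hs
  -- pointwise derivatives
  have hdb₁ : ∀ s ∈ I, HasDerivAt b₁ (deriv b₁ s) s := fun s hs =>
    (((hb₁.contDiffAt (hIopen.mem_nhds hs))).differentiableAt hone).hasDerivAt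
  have hdb₃ : ∀ s ∈ I, HasDerivAt b₃ (deriv b₃ s) s := fun s hs =>
    (((hb₃.contDiffAt (hIopen.mem_nhds hs))).differentiableAt hone).hasDerivAt
  have hZd : ∀ s ∈ I, ∀ k j, HasDerivAt (fun t => Z t k j) ((X s * Z s) k j) s := by
    intro s hs k j
    have h := ((((hZs k j).contDiffAt (hIopen.mem_nhds hs))).differentiableAt hone).hasDerivAt
    rwa [hZX s hs k j] at h
  -- skew-symmetry of X on I
  have hskew : ∀ s ∈ I, ∀ i j, X s j i = -X s i j := by
    intro s hs i j
    have hZZ : ∀ t ∈ I, Z t * star (Z t) = 1 := fun t ht =>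
      (Matrix.mem_orthogonalGroup_iff _ _).mp (hZo t ht)
    have hsum : ∀ t ∈ I, (∑ k, Z t i k * Z t j k) = (1 : Mat4) i j := by
      intro t ht
      have h := congrArg (fun M : Mat4 => M i j) (hZZ t ht)
      simpa [Matrix.mul_apply, Matrix.star_apply] using h
    have hD : HasDerivAt (fun t => ∑ k, Z t i k * Z t j k)
        (∑ k, ((X s * Z s) i k * Z s j k + Z s i k * (X s * Z s) j k)) s :=
      HasDerivAt.fun_sum fun k _ => (hZd s hs i k).fun_mul (hZd s hs j k)
    have h0 : HasDerivAt (fun t => ∑ k, Z t i k * Z t j k) 0 s := by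
      refine (hasDerivAt_const s ((1 : Mat4) i j)).congr_of_eventuallyEq ?_
      filter_upwards [hIopen.mem_nhds hs] with t ht using hsum t ht
    have huniq := hD.unique h0
    rw [Finset.sum_add_distrib] at huniq
    have h1 : (∑ k, (X s * Z s) i k * Z s j k) = X s i j := by
      have e : (∑ k, (X s * Z s) i k * Z s j k) = ((X s * Z s) * star (Z s)) i j := by
        rw [Matrix.mul_apply]
        exact Finset.sum_congr rfl fun k _ => by rw [Matrix.star_apply, star_trivial]
      rw [e, mul_assoc, hZZ s hs, mul_one]
    have h2 : (∑ k, Z s i k * (X s * Z s) j k) = X s j i := by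
      have e : (∑ k, Z s i k * (X s * Z s) j k) = (Z s * star (X s * Z s)) i j := by
        rw [Matrix.mul_apply]
        exact Finset.sum_congr rfl fun k _ => by rw [Matrix.star_apply, star_trivial]
      rw [e, StarMul.star_mul, ← mul_assoc, hZZ s hs, one_mul]
      simp [Matrix.star_apply]
    rw [h1, h2] at huniq
    linarith
  have hdiag : ∀ s ∈ I, ∀ i, X s i i = 0 := by
    intro s hs i; have h := hskew s hs i i; linarith
  -- products X * Z entrywise
  have hXZ0 : ∀ s ∈ I, ∀ j, (X s * Z s) 0 j =
      b₁ s * Z s 1 j + b₂ s * Z s 2 j + b₃ s * Z s 3 j := by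
    intro s hs j
    rw [Matrix.mul_apply, Fin.sum_univ_four, hdiag s hs 0, hX12 s hs, hX13 s hs, hX14 s hs]
    ring
  have hXZ1 : ∀ s ∈ I, ∀ j, (X s * Z s) 1 j = -b₁ s * Z s 0 j := by
    intro s hs j
    have h10 : X s 1 0 = -b₁ s := by rw [hskew s hs 0 1, hX12 s hs]
    rw [Matrix.mul_apply, Fin.sum_univ_four, hdiag s hs 1, h10, (hshape s hs).1,
      (hshape s hs).2.1]
    ring
  have hXZ2 : ∀ s ∈ I, ∀ j, (X s * Z s) 2 j = -b₂ s * Z s 0 j := by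
    intro s hs j
    have h20 : X s 2 0 = -b₂ s := by rw [hskew s hs 0 2, hX13 s hs]
    have h21 : X s 2 1 = 0 := by rw [hskew s hs 1 2, (hshape s hs).1]; ring
    rw [Matrix.mul_apply, Fin.sum_univ_four, hdiag s hs 2, h20, h21, (hshape s hs).2.2]
    ring
  have hXZ3 : ∀ s ∈ I, ∀ j, (X s * Z s) 3 j = -b₃ s * Z s 0 j := by
    intro s hs j
    have h30 : X s 3 0 = -b₃ s := by rw [hskew s hs 0 3, hX14 s hs]
    have h31 : X s 3 1 = 0 := by rw [hskew s hs 1 3, (hshape s hs).2.1]; ring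
    have h32 : X s 3 2 = 0 := by rw [hskew s hs 2 3, (hshape s hs).2.2]; ring
    rw [Matrix.mul_apply, Fin.sum_univ_four, hdiag s hs 3, h30, h31, h32]
    ring
  -- derivatives of r, c, σ
  have hdr : ∀ s ∈ I, HasDerivAt r
      ((2 * b₁ s * deriv b₁ s + 2 * b₃ s * deriv b₃ s) / (2 * r s)) s := by
    intro s hs
    have h := (((hdb₁ s hs).fun_pow 2).fun_add ((hdb₃ s hs).fun_pow 2)).sqrt (ne_of_gt (hq s hs))
    convert h using 1
    norm_num
    rfl
  have hdc : ∀ s ∈ I, HasDerivAt c (-ω s * σ s) s := by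
    intro s hs
    have h := (hdb₁ s hs).fun_div (hdr s hs) (hrne s hs)
    refine h.congr_deriv (Eq.symm ?_)
    simp only [hωdef, hσdef]
    have h2 := hrsq s hs
    have hr0 := hrne s hs
    rw [← h2]
    field_simp
    linear_combination (-deriv b₁ s) * h2
  have hdσ : ∀ s ∈ I, HasDerivAt σ (ω s * c s) s := by
    intro s hs
    have h := (hdb₃ s hs).fun_div (hdr s hs) (hrne s hs)
    refine h.congr_deriv (Eq.symm ?_)
    simp only [hωdef, hcdef]
    have h2 := hrsq s hs
    have hr0 := hrne s hs
    rw [← h2]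
    field_simp
    linear_combination (-deriv b₃ s) * h2
  refine ⟨W, Y, ⟨?_, ?_, ?_⟩, ?_, ?_, ?_, ?_, ?_⟩
  · -- SmoothMat
    intro i j
    fin_cases i
    · show ContDiffOn ℝ (⊤ : ℕ∞) (fun s => W s 0 j) I
      simp only [hW0]; exact hZs 0 j
    · show ContDiffOn ℝ (⊤ : ℕ∞) (fun s => W s 1 j) I
      simp only [hW1]; exact (hcs.mul (hZs 1 j)).add (hσs.mul (hZs 3 j))
    · show ContDiffOn ℝ (⊤ : ℕ∞) (fun s => W s 2 j) I
      simp only [hW2]; exact hZs 2 j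
    · show ContDiffOn ℝ (⊤ : ℕ∞) (fun s => W s 3 j) I
      simp only [hW3]; exact (hσs.neg.mul (hZs 1 j)).add (hcs.mul (hZs 3 j))
  · -- orthogonality
    intro s hs
    have h0 := hrne s hs
    have h2 := hrsq s hs
    have hpy : b₁ s ^ 2 * (r s)⁻¹ ^ 2 + (r s)⁻¹ ^ 2 * b₃ s ^ 2 = 1 := by
      field_simp
      linear_combination h2.symm
    have hRo : Rm s ∈ Matrix.orthogonalGroup (Fin 4) ℝ := by
      rw [Matrix.mem_orthogonalGroup_iff]
      have hstar : star (Rm s) =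
          !![1, 0, 0, 0; 0, c s, 0, -σ s; 0, 0, 1, 0; 0, σ s, 0, c s] := by
        ext i j
        fin_cases i <;> fin_cases j <;>
          simp [hRmdef, Matrix.star_apply, Matrix.vecHead, Matrix.vecTail]
      rw [show Matrix.transpose (Rm s) = star (Rm s) from (Matrix.conjTranspose_eq_transpose_of_trivial _).symm, hstar]
      ext i j
      fin_cases i <;> fin_cases j <;>
        simp [hRmdef, Matrix.mul_apply, Fin.sum_univ_four, Matrix.vecMul,
          dotProduct, Matrix.one_apply, Matrix.vecHead, Matrix.vecTail] <;>
        first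
          | ring1
          | (field_simp; linear_combination h2.symm)
          | nlinarith [hc2 s hs]
    rw [hWdef]
    exact mul_mem hRo (hZo s hs)
  · -- first row
    intro s hs i
    rw [hW0 s i]
    exact hZr s hs i
  · -- MatDerivEq
    intro s hs i j
    fin_cases i
    · show deriv (fun t => W t 0 j) s = (Y s * W s) 0 j
      have e : (fun t => W t 0 j) = fun t => Z t 0 j := funext fun t => hW0 t j
      rw [e, hZX s hs 0 j, hXZ0 s hs j, Matrix.mul_apply, Fin.sum_univ_four,
        hY00 s, hY01 s, hY02 s, hY03 s, hW0 s j, hW1 s j, hW2 s j, hW3 s j]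
      have h0 := hrne s hs
      simp only [hcdef, hσdef]
      field_simp
      ring
    · show deriv (fun t => W t 1 j) s = (Y s * W s) 1 j
      have e : (fun t => W t 1 j) = fun t => c t * Z t 1 j + σ t * Z t 3 j :=
        funext fun t => hW1 t j
      rw [e]
      have h := ((hdc s hs).fun_mul (hZd s hs 1 j)).fun_add ((hdσ s hs).fun_mul (hZd s hs 3 j))
      rw [h.deriv, hXZ1 s hs j, hXZ3 s hs j, Matrix.mul_apply, Fin.sum_univ_four,
        hY10 s, hY11 s, hY12 s, hY13 s, hW0 s j, hW1 s j, hW2 s j, hW3 s j]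
      have h0 := hrne s hs
      have hq0 := ne_of_gt (hq s hs)
      have h2 := hrsq s hs
      simp only [hcdef, hσdef, hωdef]
      rw [← h2]
      field_simp
      linear_combination (r s ^ 2 * Z s 0 j) * h2
    · show deriv (fun t => W t 2 j) s = (Y s * W s) 2 j
      have e : (fun t => W t 2 j) = fun t => Z t 2 j := funext fun t => hW2 t j
      rw [e, hZX s hs 2 j, hXZ2 s hs j, Matrix.mul_apply, Fin.sum_univ_four,
        hY20 s, hY21 s, hY22 s, hY23 s, hW0 s j]
      ring
    · show deriv (fun t => W t 3 j) s = (Y s * W s) 3 j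
      have e : (fun t => W t 3 j) = fun t => -σ t * Z t 1 j + c t * Z t 3 j :=
        funext fun t => hW3 t j
      rw [e]
      have h := (((hdσ s hs).fun_neg).fun_mul (hZd s hs 1 j)).fun_add ((hdc s hs).fun_mul (hZd s hs 3 j))
      rw [h.deriv, hXZ1 s hs j, hXZ3 s hs j, Matrix.mul_apply, Fin.sum_univ_four,
        hY30 s, hY31 s, hY32 s, hY33 s, hW0 s j, hW1 s j, hW2 s j, hW3 s j]
      have h0 := hrne s hs
      have hq0 := ne_of_gt (hq s hs)
      have h2 := hrsq s hs
      simp only [hcdef, hσdef, hωdef]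
      rw [← h2]
      field_simp
      ring
  · intro s hs
    exact ⟨hY03 s, hY12 s, hY23 s⟩
  · intro s hs; exact hY01 s
  · intro s hs; exact hY02 s
  · intro s hs; exact hY13 s
end
end

section
/- Let γ : I → ℝ⁴ be a 2-regular curve parametrized by arc length admitting a Bishop frame with coefficient matrix X_B. (1) For any other Bishop frame on γ with coefficient matrix X̃, there exists a constant matrix Q ∈ O(3) such that X̃(s) = P·X_B(s)·P⁻¹ for all s, where P is the 4×4 block-diagonal matrix with blocks 1 and Q. (2) Conversely, for every constant Q ∈ O(3), γ admits a Bishop frame whose coefficient matrix is P·X_B(s)·P⁻¹ with P the block-diagonal matrix with blocks 1 and Q. -/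
noncomputable section

open Set

/-- The 4×4 block-diagonal matrix with blocks 1 and Q. -/
def blockDiag1 (Q : Matrix (Fin 3) (Fin 3) ℝ) : Mat4 :=
  Matrix.of fun i j =>
    if i = 0 then (if j = 0 then (1 : ℝ) else 0)
    else if j = 0 then 0
    else Q ⟨i.val - 1, by have := i.isLt; omega⟩ ⟨j.val - 1, by have := j.isLt; omega⟩

open Matrix

-- basic orthogonality facts
lemma orth_AAt {n : ℕ} {A : Matrix (Fin n) (Fin n) ℝ}
    (h : A ∈ Matrix.orthogonalGroup (Fin n) ℝ) : A * Aᵀ = 1 := by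
  have := (Matrix.mem_orthogonalGroup_iff _ _).mp h
  exact this

lemma orth_AtA {n : ℕ} {A : Matrix (Fin n) (Fin n) ℝ}
    (h : A ∈ Matrix.orthogonalGroup (Fin n) ℝ) : Aᵀ * A = 1 := by
  have := (Matrix.mem_orthogonalGroup_iff' _ _).mp h
  exact this

lemma mem_orth_of_mul {n : ℕ} {A : Matrix (Fin n) (Fin n) ℝ}
    (h : A * Aᵀ = 1) : A ∈ Matrix.orthogonalGroup (Fin n) ℝ := by
  rw [Matrix.mem_orthogonalGroup_iff _ _]
  exact h

-- differentiability of entries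
lemma diffAt_entry {I : Set ℝ} (hIopen : IsOpen I) {Z : ℝ → Mat4} (hsm : SmoothMat I Z)
    {s : ℝ} (hs : s ∈ I) (i j : Fin 4) : DifferentiableAt ℝ (fun t => Z t i j) s :=
  ((hsm i j).differentiableOn (by simp)).differentiableAt (hIopen.mem_nhds hs)

-- deriv of a locally constant function
lemma deriv_zero_of_const_on {I : Set ℝ} (hIopen : IsOpen I) {f : ℝ → ℝ} {c : ℝ}
    (h : ∀ t ∈ I, f t = c) {s : ℝ} (hs : s ∈ I) : deriv f s = 0 := by
  have he : f =ᶠ[nhds s] fun _ => c := Filter.eventuallyEq_of_mem (hIopen.mem_nhds hs) h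
  rw [he.deriv_eq, deriv_const]

-- constancy from zero derivative on a convex open set
lemma const_of_deriv_zero {I : Set ℝ} (hIopen : IsOpen I) (hconv : Convex ℝ I) {f : ℝ → ℝ}
    (hf : ∀ x ∈ I, DifferentiableAt ℝ f x) (hf' : ∀ x ∈ I, deriv f x = 0)
    {x y : ℝ} (hx : x ∈ I) (hy : y ∈ I) : f x = f y := by
  apply hconv.is_const_of_fderivWithin_eq_zero
    (fun z hz => (hf z hz).differentiableWithinAt) _ hx hy
  intro z hz
  rw [fderivWithin_of_isOpen hIopen hz, ← toSpanSingleton_deriv, hf' z hz]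
  ext
  simp

-- derivative of pairing of two frames
lemma deriv_pair {I : Set ℝ} (hIopen : IsOpen I) {W Z Y X : ℝ → Mat4}
    (hWsm : SmoothMat I W) (hZsm : SmoothMat I Z)
    (hWY : MatDerivEq I W Y) (hZX : MatDerivEq I Z X) {s : ℝ} (hs : s ∈ I) (i j : Fin 4) :
    deriv (fun t => ∑ k, W t i k * Z t j k) s
      = ∑ k, ((Y s * W s) i k * Z s j k + W s i k * (X s * Z s) j k) := by
  rw [deriv_fun_sum (fun k _ => (diffAt_entry hIopen hWsm hs i k).fun_mul (diffAt_entry hIopen hZsm hs j k))]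
  refine Finset.sum_congr rfl fun k _ => ?_
  rw [deriv_fun_mul (diffAt_entry hIopen hWsm hs i k) (diffAt_entry hIopen hZsm hs j k),
    hWY s hs i k, hZX s hs j k]

-- skewness of the coefficient matrix
lemma skew_of_frame {I : Set ℝ} (hIopen : IsOpen I) {Z X : ℝ → Mat4}
    (hZsm : SmoothMat I Z) (horth : ∀ s ∈ I, Z s ∈ Matrix.orthogonalGroup (Fin 4) ℝ)
    (hZX : MatDerivEq I Z X) : ∀ s ∈ I, ∀ i j, X s j i = -(X s i j) := by
  intro s hs i j
  have hZZt : Z s * (Z s)ᵀ = 1 := orth_AAt (horth s hs)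
  have hconst : ∀ t ∈ I, (∑ k, Z t i k * Z t j k) = (1 : Mat4) i j := by
    intro t ht
    have h1 : Z t * (Z t)ᵀ = 1 := orth_AAt (horth t ht)
    calc (∑ k, Z t i k * Z t j k) = (Z t * (Z t)ᵀ) i j := by simp only [Matrix.mul_apply, Matrix.transpose_apply]
      _ = (1 : Mat4) i j := by rw [h1]
  have h0 : deriv (fun t => ∑ k, Z t i k * Z t j k) s = 0 :=
    deriv_zero_of_const_on hIopen hconst hs
  have h1 := deriv_pair hIopen hZsm hZsm hZX hZX hs i j
  rw [h0] at h1
  have e1 : ∑ k, (X s * Z s) i k * Z s j k = X s i j := by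
    have e : ∑ k, (X s * Z s) i k * Z s j k = ((X s * Z s) * (Z s)ᵀ) i j := by
      simp only [Matrix.mul_apply, Matrix.transpose_apply]
    rw [e, Matrix.mul_assoc, hZZt, Matrix.mul_one]
  have e2 : ∑ k, Z s i k * (X s * Z s) j k = X s j i := by
    have e : ∑ k, Z s i k * (X s * Z s) j k = (Z s * (X s * Z s)ᵀ) i j := by
      simp only [Matrix.mul_apply, Matrix.transpose_apply]
    rw [e, Matrix.transpose_mul, ← Matrix.mul_assoc, hZZt, Matrix.one_mul,
      Matrix.transpose_apply]
  rw [Finset.sum_add_distrib, e1, e2] at h1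
  linarith

-- lower 3x3 block of a skew ShapeB matrix vanishes
lemma lower_zero {A : Mat4} (hsk : ∀ i j, A j i = -(A i j)) (hsh : ShapeB A) :
    ∀ i j : Fin 4, i ≠ 0 → j ≠ 0 → A i j = 0 := by
  obtain ⟨h12, h13, h23⟩ := hsh
  have hd : ∀ i, A i i = 0 := fun i => by have := hsk i i; linarith
  have h21 : A 2 1 = 0 := by rw [hsk 1 2, h12, neg_zero]
  have h31 : A 3 1 = 0 := by rw [hsk 1 3, h13, neg_zero]
  have h32 : A 3 2 = 0 := by rw [hsk 2 3, h23, neg_zero]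
  intro i j hi hj
  fin_cases i <;> fin_cases j <;>
    first
      | exact absurd rfl hi
      | exact absurd rfl hj
      | exact hd _
      | exact h12 | exact h13 | exact h23 | exact h21 | exact h31 | exact h32

lemma blockDiag1_mul (Q R : Matrix (Fin 3) (Fin 3) ℝ) :
    blockDiag1 Q * blockDiag1 R = blockDiag1 (Q * R) := by
  ext i j
  fin_cases i <;> fin_cases j <;>
    simp [blockDiag1, Matrix.mul_apply, Fin.sum_univ_four, Fin.sum_univ_three, show ((3:Fin 4):ℕ) = 3 from rfl, show ((2:Fin 4):ℕ) = 2 from rfl, show ((1:Fin 4):ℕ) = 1 from rfl]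

lemma blockDiag1_transpose (Q : Matrix (Fin 3) (Fin 3) ℝ) :
    (blockDiag1 Q)ᵀ = blockDiag1 Qᵀ := by
  ext i j
  fin_cases i <;> fin_cases j <;>
    simp [blockDiag1, Matrix.transpose_apply, show ((3:Fin 4):ℕ) = 3 from rfl, show ((2:Fin 4):ℕ) = 2 from rfl, show ((1:Fin 4):ℕ) = 1 from rfl]

lemma blockDiag1_one : blockDiag1 (1 : Matrix (Fin 3) (Fin 3) ℝ) = 1 := by
  ext i j
  fin_cases i <;> fin_cases j <;>
    simp [blockDiag1, Matrix.one_apply, show ((3:Fin 4):ℕ) = 3 from rfl, show ((2:Fin 4):ℕ) = 2 from rfl, show ((1:Fin 4):ℕ) = 1 from rfl]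

lemma blockDiag1_inj {Q R : Matrix (Fin 3) (Fin 3) ℝ}
    (h : blockDiag1 Q = blockDiag1 R) : Q = R := by
  ext a b
  have := congrFun (congrFun h ⟨a.val + 1, by omega⟩) ⟨b.val + 1, by omega⟩
  simpa [blockDiag1, Fin.ext_iff, -Fin.val_eq_zero_iff] using this


lemma hsum_eq (A B : Mat4) (i j : Fin 4) :
    (∑ k, A i k * B j k) = (A * Bᵀ) i j := by
  simp only [Matrix.mul_apply, Matrix.transpose_apply]

lemma blockDiag1_col0 (Q : Matrix (Fin 3) (Fin 3) ℝ) {a : Fin 4} (ha : a ≠ 0) :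
    blockDiag1 Q a 0 = 0 := by simp [blockDiag1, ha]

lemma blockDiag1_mem {Q : Matrix (Fin 3) (Fin 3) ℝ}
    (hQ : Q ∈ Matrix.orthogonalGroup (Fin 3) ℝ) :
    blockDiag1 Q ∈ Matrix.orthogonalGroup (Fin 4) ℝ := by
  apply mem_orth_of_mul
  rw [blockDiag1_transpose, blockDiag1_mul, orth_AAt hQ, blockDiag1_one]

lemma conj_lower_zero {A : Mat4} {Q : Matrix (Fin 3) (Fin 3) ℝ}
    (hA : ∀ i j : Fin 4, i ≠ 0 → j ≠ 0 → A i j = 0)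
    {i j : Fin 4} (hi : i ≠ 0) (hj : j ≠ 0) :
    (blockDiag1 Q * A * (blockDiag1 Q)ᵀ) i j = 0 := by
  have hPA : ∀ l : Fin 4, l ≠ 0 → (blockDiag1 Q * A) i l = 0 := by
    intro l hl
    rw [Matrix.mul_apply]
    apply Finset.sum_eq_zero
    intro k _
    by_cases hk : k = 0
    · subst hk; rw [blockDiag1_col0 Q hi, zero_mul]
    · rw [hA k l hk hl, mul_zero]
  rw [Matrix.mul_apply]
  apply Finset.sum_eq_zero
  intro l _
  by_cases hl : l = 0
  · subst hl
    rw [Matrix.transpose_apply, blockDiag1_col0 Q hj, mul_zero]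
  · rw [hPA l hl, zero_mul]


/-- Bishop frames of a 2-regular curve are unique up to a constant rotation Q ∈ O(3):
(1) any two Bishop coefficient matrices are conjugate by a constant block matrix P = 1 ⊕ Q;
(2) conversely every such conjugate is realized by a Bishop frame. -/
theorem bishop_frames_conjugate (I : Set ℝ) (hIopen : IsOpen I)
    (hIinterval : I.OrdConnected) (γ : ℝ → E4) (hγ : IsTwoRegularCurve I γ)
    (Z X : ℝ → Mat4) (hZ : IsFrameOn I γ Z) (hZX : MatDerivEq I Z X)
    (hshape : ∀ s ∈ I, ShapeB (X s)) :
    (∀ W Y : ℝ → Mat4, IsFrameOn I γ W → MatDerivEq I W Y → (∀ s ∈ I, ShapeB (Y s)) →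
      ∃ Q : Matrix (Fin 3) (Fin 3) ℝ, Q ∈ Matrix.orthogonalGroup (Fin 3) ℝ ∧
        ∀ s ∈ I, Y s = blockDiag1 Q * X s * (blockDiag1 Q)⁻¹) ∧
    (∀ Q : Matrix (Fin 3) (Fin 3) ℝ, Q ∈ Matrix.orthogonalGroup (Fin 3) ℝ →
      ∃ W Y : ℝ → Mat4, IsFrameOn I γ W ∧ MatDerivEq I W Y ∧ (∀ s ∈ I, ShapeB (Y s)) ∧
        ∀ s ∈ I, Y s = blockDiag1 Q * X s * (blockDiag1 Q)⁻¹) := by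
  obtain ⟨hZsm, hZorth, hZrow⟩ := hZ
  have hXskew := skew_of_frame hIopen hZsm hZorth hZX
  have hconv : Convex ℝ I := convex_iff_ordConnected.mpr hIinterval
  constructor
  · -- Part 1
    intro W Y hW hWY hYshape
    obtain ⟨hWsm, hWorth, hWrow⟩ := hW
    have hYskew := skew_of_frame hIopen hWsm hWorth hWY
    rcases Set.eq_empty_or_nonempty I with hI | ⟨s₀, hs₀⟩
    · refine ⟨1, ?_, ?_⟩
      · rw [Matrix.mem_orthogonalGroup_iff _ _]; simp
      · intro s hs; rw [hI] at hs; exact absurd hs (Set.notMem_empty s)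
    · -- values of the transition matrix entries
      have hrow0 : ∀ s ∈ I, ∀ j, (∑ k, W s 0 k * Z s j k) = (1 : Mat4) 0 j := by
        intro s hs j
        have hWZ : ∀ k, W s 0 k = Z s 0 k := fun k => by rw [hWrow s hs k, hZrow s hs k]
        calc (∑ k, W s 0 k * Z s j k) = ∑ k, Z s 0 k * Z s j k :=
              Finset.sum_congr rfl fun k _ => by rw [hWZ k]
          _ = (Z s * (Z s)ᵀ) 0 j := hsum_eq _ _ _ _
          _ = (1 : Mat4) 0 j := by rw [orth_AAt (hZorth s hs)]
      have hcol0 : ∀ s ∈ I, ∀ i, (∑ k, W s i k * Z s 0 k) = (1 : Mat4) i 0 := by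
        intro s hs i
        have hWZ : ∀ k, Z s 0 k = W s 0 k := fun k => by rw [hWrow s hs k, hZrow s hs k]
        calc (∑ k, W s i k * Z s 0 k) = ∑ k, W s i k * W s 0 k :=
              Finset.sum_congr rfl fun k _ => by rw [hWZ k]
          _ = (W s * (W s)ᵀ) i 0 := hsum_eq _ _ _ _
          _ = (1 : Mat4) i 0 := by rw [orth_AAt (hWorth s hs)]
      have hmM : ∀ s (i j : Fin 4), (∑ k, W s i k * Z s j k) = (W s * (Z s)ᵀ) i j :=
        fun s i j => hsum_eq _ _ _ _
      -- derivative formula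
      have hderiv : ∀ s ∈ I, ∀ i j, deriv (fun t => ∑ k, W t i k * Z t j k) s
          = (Y s * (W s * (Z s)ᵀ)) i j - ((W s * (Z s)ᵀ) * X s) i j := by
        intro s hs i j
        rw [deriv_pair hIopen hWsm hZsm hWY hZX hs i j, Finset.sum_add_distrib]
        have e1 : ∑ k, (Y s * W s) i k * Z s j k = (Y s * (W s * (Z s)ᵀ)) i j := by
          rw [hsum_eq, Matrix.mul_assoc]
        have hXt : (X s)ᵀ = -(X s) := by
          ext a b
          rw [Matrix.transpose_apply, Matrix.neg_apply, hXskew s hs a b]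
        have e2 : ∑ k, W s i k * (X s * Z s) j k = -(((W s * (Z s)ᵀ) * X s) i j) := by
          calc (∑ k, W s i k * (X s * Z s) j k) = (W s * (X s * Z s)ᵀ) i j := hsum_eq _ _ _ _
            _ = (W s * ((Z s)ᵀ * (X s)ᵀ)) i j := by rw [Matrix.transpose_mul]
            _ = ((W s * (Z s)ᵀ) * (X s)ᵀ) i j := by rw [Matrix.mul_assoc]
            _ = ((W s * (Z s)ᵀ) * -(X s)) i j := by rw [hXt]
            _ = -(((W s * (Z s)ᵀ) * X s) i j) := by rw [Matrix.mul_neg, Matrix.neg_apply]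
        rw [e1, e2]
        ring
      have hXlow : ∀ s ∈ I, ∀ i j : Fin 4, i ≠ 0 → j ≠ 0 → X s i j = 0 :=
        fun s hs => lower_zero (hXskew s hs) (hshape s hs)
      have hYlow : ∀ s ∈ I, ∀ i j : Fin 4, i ≠ 0 → j ≠ 0 → Y s i j = 0 :=
        fun s hs => lower_zero (hYskew s hs) (hYshape s hs)
      -- all derivatives vanish
      have hdz : ∀ i j : Fin 4, ∀ s ∈ I, deriv (fun t => ∑ k, W t i k * Z t j k) s = 0 := by
        intro i j s hs
        by_cases hi : i = 0
        · subst hi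
          exact deriv_zero_of_const_on hIopen (fun t ht => hrow0 t ht j) hs
        · by_cases hj : j = 0
          · subst hj
            exact deriv_zero_of_const_on hIopen (fun t ht => hcol0 t ht i) hs
          · rw [hderiv s hs i j]
            have hM0 : (W s * (Z s)ᵀ) 0 j = 0 := by
              rw [← hmM, hrow0 s hs j, Matrix.one_apply_ne (Ne.symm hj)]
            have hMc0 : (W s * (Z s)ᵀ) i 0 = 0 := by
              rw [← hmM, hcol0 s hs i, Matrix.one_apply_ne hi]
            have t1 : (Y s * (W s * (Z s)ᵀ)) i j = 0 := by
              rw [Matrix.mul_apply]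
              apply Finset.sum_eq_zero
              intro k _
              by_cases hk : k = 0
              · subst hk; rw [hM0, mul_zero]
              · rw [hYlow s hs i k hi hk, zero_mul]
            have t2 : ((W s * (Z s)ᵀ) * X s) i j = 0 := by
              rw [Matrix.mul_apply]
              apply Finset.sum_eq_zero
              intro k _
              by_cases hk : k = 0
              · subst hk; rw [hMc0, zero_mul]
              · rw [hXlow s hs k j hk hj, mul_zero]
            rw [t1, t2, sub_zero]
      -- the transition matrix is constant
      have hmconst : ∀ i j : Fin 4, ∀ s ∈ I,
          (∑ k, W s i k * Z s j k) = ∑ k, W s₀ i k * Z s₀ j k := by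
        intro i j s hs
        exact const_of_deriv_zero hIopen hconv
          (fun x hx => DifferentiableAt.fun_sum fun k _ =>
            (diffAt_entry hIopen hWsm hx i k).fun_mul (diffAt_entry hIopen hZsm hx j k))
          (hdz i j) hs hs₀
      set Q : Matrix (Fin 3) (Fin 3) ℝ :=
        Matrix.of fun a b => (W s₀ * (Z s₀)ᵀ) ⟨a.val + 1, by omega⟩ ⟨b.val + 1, by omega⟩
        with hQdef
      have hP : ∀ s ∈ I, W s * (Z s)ᵀ = blockDiag1 Q := by
        intro s hs
        ext i j
        by_cases hi : i = 0
        · subst hi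
          rw [← hmM, hrow0 s hs j]
          by_cases hj : j = 0
          · subst hj; simp [blockDiag1, Matrix.one_apply]
          · rw [Matrix.one_apply_ne (Ne.symm hj)]
            simp [blockDiag1, hj]
        · by_cases hj : j = 0
          · subst hj
            rw [← hmM, hcol0 s hs i, Matrix.one_apply_ne hi]
            simp [blockDiag1, hi]
          · rw [← hmM, hmconst i j s hs, hmM]
            simp only [blockDiag1, hQdef, Matrix.of_apply, if_neg hi, if_neg hj]
            have h1 : i.val ≠ 0 := fun h => hi (Fin.ext h)
            have h2 : j.val ≠ 0 := fun h => hj (Fin.ext h)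
            have e1 : i = (⟨i.val - 1 + 1, by have := i.isLt; omega⟩ : Fin 4) :=
              Fin.ext (show i.val = i.val - 1 + 1 by omega)
            have e2 : j = (⟨j.val - 1 + 1, by have := j.isLt; omega⟩ : Fin 4) :=
              Fin.ext (show j.val = j.val - 1 + 1 by omega)
            exact congrArg₂ (W s₀ * (Z s₀)ᵀ) e1 e2
      have hZtmem : (Z s₀)ᵀ ∈ Matrix.orthogonalGroup (Fin 4) ℝ := by
        apply mem_orth_of_mul
        rw [Matrix.transpose_transpose]
        exact orth_AtA (hZorth s₀ hs₀)
      have hPmem : blockDiag1 Q ∈ Matrix.orthogonalGroup (Fin 4) ℝ := by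
        rw [← hP s₀ hs₀]
        exact mul_mem (hWorth s₀ hs₀) hZtmem
      have hQmem : Q ∈ Matrix.orthogonalGroup (Fin 3) ℝ := by
        apply mem_orth_of_mul
        apply blockDiag1_inj
        rw [← blockDiag1_mul, ← blockDiag1_transpose, blockDiag1_one]
        exact orth_AAt hPmem
      refine ⟨Q, hQmem, ?_⟩
      intro s hs
      have hYM : Y s * blockDiag1 Q = blockDiag1 Q * X s := by
        rw [← hP s hs]
        ext i j
        have h0 := hdz i j s hs
        rw [hderiv s hs i j] at h0
        linarith
      have hPPt : blockDiag1 Q * (blockDiag1 Q)ᵀ = 1 := orth_AAt hPmem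
      have hPinv : (blockDiag1 Q)⁻¹ = (blockDiag1 Q)ᵀ := Matrix.inv_eq_right_inv hPPt
      calc Y s = Y s * (blockDiag1 Q * (blockDiag1 Q)⁻¹) := by
            rw [hPinv, hPPt, Matrix.mul_one]
        _ = (Y s * blockDiag1 Q) * (blockDiag1 Q)⁻¹ := by rw [Matrix.mul_assoc]
        _ = blockDiag1 Q * X s * (blockDiag1 Q)⁻¹ := by rw [hYM]
  · -- Part 2
    intro Q hQ
    have hPmem := blockDiag1_mem hQ
    have hPPt : blockDiag1 Q * (blockDiag1 Q)ᵀ = 1 := orth_AAt hPmem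
    have hPtP : (blockDiag1 Q)ᵀ * blockDiag1 Q = 1 := orth_AtA hPmem
    have hPinv : (blockDiag1 Q)⁻¹ = (blockDiag1 Q)ᵀ := Matrix.inv_eq_right_inv hPPt
    refine ⟨fun t => blockDiag1 Q * Z t, fun t => blockDiag1 Q * X t * (blockDiag1 Q)⁻¹,
      ⟨?_, ?_, ?_⟩, ?_, ?_, fun s hs => rfl⟩
    · -- smooth
      intro i j
      have hfun : (fun s => (blockDiag1 Q * Z s) i j)
          = fun s => ∑ k, blockDiag1 Q i k * Z s k j := by
        funext s; rw [Matrix.mul_apply]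
      rw [hfun]
      exact ContDiffOn.sum fun k _ => contDiffOn_const.mul (hZsm k j)
    · -- orthogonal
      intro s hs
      exact mul_mem hPmem (hZorth s hs)
    · -- first row
      intro s hs i
      show (blockDiag1 Q * Z s) 0 i = deriv γ s i
      have : (blockDiag1 Q * Z s) 0 i = Z s 0 i := by
        rw [Matrix.mul_apply, Fin.sum_univ_four]
        simp [blockDiag1]
      rw [this, hZrow s hs i]
    · -- derivative equation
      intro s hs i j
      have hfun : (fun t => (blockDiag1 Q * Z t) i j)
          = fun t => ∑ k, blockDiag1 Q i k * Z t k j := by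
        funext t; rw [Matrix.mul_apply]
      rw [hfun, deriv_fun_sum (fun k _ => (diffAt_entry hIopen hZsm hs k j).const_mul _)]
      have step1 : ∑ k, deriv (fun t => blockDiag1 Q i k * Z t k j) s
          = (blockDiag1 Q * (X s * Z s)) i j := by
        rw [Matrix.mul_apply]
        refine Finset.sum_congr rfl fun k _ => ?_
        rw [deriv_const_mul _ (diffAt_entry hIopen hZsm hs k j), hZX s hs k j]
      rw [step1]
      have step2 : blockDiag1 Q * X s * (blockDiag1 Q)⁻¹ * (blockDiag1 Q * Z s)
          = blockDiag1 Q * (X s * Z s) := by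
        rw [hPinv]
        have hcancel : (blockDiag1 Q)ᵀ * (blockDiag1 Q * Z s) = Z s := by
          rw [← Matrix.mul_assoc, hPtP, Matrix.one_mul]
        rw [Matrix.mul_assoc (blockDiag1 Q * X s), hcancel, Matrix.mul_assoc]
      rw [step2]
    · -- shape
      intro s hs
      have hXlow := lower_zero (hXskew s hs) (hshape s hs)
      refine ⟨?_, ?_, ?_⟩ <;>
      · show (blockDiag1 Q * X s * (blockDiag1 Q)⁻¹) _ _ = 0
        rw [hPinv]
        exact conj_lower_zero hXlow (by decide) (by decide)
end
end
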